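/- arXiv:1612.09171 — 7 statements merged into one kernel-verified Lean document; each statement's English description precedes it below -/
import Mathlib

section
/- For any convex Ψ : ℝ → ℝ, any Γ > 0 and any g, x ∈ ℝ, one has Ŵ(g, x, Γ, Ψ) ≥ (Γ/2)·(d̂(g, x, Γ, Ψ))². -/
/-- The proximal function `W(d, g, x, Γ, Ψ) = -g·d - (Γ/2)·d² + Ψ(x) - Ψ(x + d)`. -/
noncomputable def W (d g x Γ : ℝ) (Ψ : ℝ → ℝ) : ℝ :=
  -(g * d) - Γ / 2 * d ^ 2 + Ψ x - Ψ (x + d)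

/-- `Ŵ(g, x, Γ, Ψ) = sup_{d ∈ ℝ} W(d, g, x, Γ, Ψ)`. -/
noncomputable def What (g x Γ : ℝ) (Ψ : ℝ → ℝ) : ℝ := ⨆ d : ℝ, W d g x Γ Ψ

/-!
Shrinking the step `d` to `l * d` with `l ∈ [0, 1]` loses at most `l` times the convex part
`Ψ x - Ψ (x + d)` but gains `l (1 - l) (Γ/2) d²` in the quadratic part. At a maximizer `d̂` this
forces `(1 - l) W(d̂) ≥ l (1 - l) (Γ/2) d̂²`; dividing by `1 - l` and letting `l → 1` gives
`Ŵ = W(d̂) ≥ (Γ/2) d̂²`.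
-/

open Filter Set Topology

theorem mul_W_add_le_W_mul {Ψ : ℝ → ℝ} (hΨ : ConvexOn ℝ univ Ψ) (d g x Γ : ℝ) {l : ℝ}
    (hl₀ : 0 ≤ l) (hl₁ : l ≤ 1) :
    l * W d g x Γ Ψ + l * (1 - l) * (Γ / 2 * d ^ 2) ≤ W (l * d) g x Γ Ψ := by
  have hconv : Ψ (x + l * d) ≤ (1 - l) * Ψ x + l * Ψ (x + d) := by
    have := hΨ.2 (mem_univ x) (mem_univ (x + d)) (sub_nonneg.2 hl₁) hl₀ (sub_add_cancel 1 l)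
    simpa only [smul_eq_mul, show (1 - l) * x + l * (x + d) = x + l * d by ring] using this
  simp only [W]
  linear_combination hconv

theorem le_of_forall_mem_Ico_mul_le {c w : ℝ} (h : ∀ l ∈ Ico (0 : ℝ) 1, l * c ≤ w) : c ≤ w := by
  have hlim : Tendsto (fun l : ℝ => l * c) (𝓝[<] 1) (𝓝 c) := by
    simpa using ((continuous_mul_const c).tendsto 1).mono_left nhdsWithin_le_nhds
  refine le_of_tendsto hlim ?_
  filter_upwards [Ioo_mem_nhdsLT zero_lt_one] with l hl
  exact h l (Ioo_subset_Ico_self hl)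

theorem half_mul_sq_le_W_of_isMaxOn {Ψ : ℝ → ℝ} (hΨ : ConvexOn ℝ univ Ψ) {g x Γ dhat : ℝ}
    (hd : IsMaxOn (fun d : ℝ => W d g x Γ Ψ) univ dhat) :
    Γ / 2 * dhat ^ 2 ≤ W dhat g x Γ Ψ := by
  refine le_of_forall_mem_Ico_mul_le fun l ⟨hl₀, hl₁⟩ => ?_
  have hshrink := mul_W_add_le_W_mul hΨ dhat g x Γ hl₀ hl₁.le
  have hmax : W (l * dhat) g x Γ Ψ ≤ W dhat g x Γ Ψ := hd (mem_univ _)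
  have : (1 - l) * (l * (Γ / 2 * dhat ^ 2)) ≤ (1 - l) * W dhat g x Γ Ψ := by
    linear_combination hshrink + hmax
  exact le_of_mul_le_mul_left this (sub_pos.2 hl₁)

theorem What_eq_of_isMaxOn {Ψ : ℝ → ℝ} {g x Γ dhat : ℝ}
    (hd : IsMaxOn (fun d : ℝ => W d g x Γ Ψ) univ dhat) :
    What g x Γ Ψ = W dhat g x Γ Ψ :=
  le_antisymm (ciSup_le fun d => hd (mem_univ d))
    (le_ciSup (f := fun d => W d g x Γ Ψ) ⟨_, forall_mem_range.2 fun d => hd (mem_univ d)⟩ dhat)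

theorem What_ge_half_Gamma_dhat_sq_general (Ψ : ℝ → ℝ) (hΨ : ConvexOn ℝ Set.univ Ψ)
    (Γ : ℝ) (g x dhat : ℝ)
    (hd : IsMaxOn (fun d : ℝ => W d g x Γ Ψ) Set.univ dhat) :
    What g x Γ Ψ ≥ Γ / 2 * dhat ^ 2 := by
  rw [What_eq_of_isMaxOn hd]
  exact half_mul_sq_le_W_of_isMaxOn hΨ hd

/-- If `dhat` maximizes `d ↦ W(d, g, x, Γ, Ψ)` (i.e. `dhat = d̂(g,x,Γ,Ψ)`), then
`Ŵ(g,x,Γ,Ψ) ≥ (Γ/2)·d̂(g,x,Γ,Ψ)²`. -/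
theorem What_ge_half_Gamma_dhat_sq (Ψ : ℝ → ℝ) (hΨ : ConvexOn ℝ Set.univ Ψ)
    (Γ : ℝ) (hΓ : 0 < Γ) (g x dhat : ℝ)
    (hd : IsMaxOn (fun d : ℝ => W d g x Γ Ψ) Set.univ dhat) :
    What g x Γ Ψ ≥ Γ / 2 * dhat ^ 2 :=
  What_ge_half_Gamma_dhat_sq_general Ψ hΨ Γ g x dhat hd
end

section
/- For any convex Ψ : ℝ → ℝ, any Γ > 0, any x ∈ ℝ and any g₁, g₂ ∈ ℝ, one has Ŵ(g₂, x, Γ, Ψ) ≤ (3/2)·Ŵ(g₁, x, Γ, Ψ) + (2/Γ)·(g₁ − g₂)². Equivalently, Ŵ(g₁, x, Γ, Ψ) ≥ (2/3)·Ŵ(g₂, x, Γ, Ψ) − (4/(3Γ))·(g₁ − g₂)². -/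
open Set

theorem ConvexOn.add_rightDeriv_mul_sub_le {S : Set ℝ} {f : ℝ → ℝ} {x y : ℝ}
    (hf : ConvexOn ℝ S f) (hx : x ∈ interior S) (hy : y ∈ S) :
    f x + derivWithin f (Ioi x) x * (y - x) ≤ f y := by
  rcases lt_trichotomy x y with hxy | rfl | hyx
  · have hslope := hf.rightDeriv_le_slope_of_mem_interior hx hy hxy
    rw [slope_def_field, le_div_iff₀ (sub_pos.2 hxy)] at hslope
    linarith
  · simp
  · have hslope := (hf.slope_le_leftDeriv_of_mem_interior hy hx hyx).trans
      (hf.leftDeriv_le_rightDeriv_of_mem_interior hx)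
    rw [slope_def_field, div_le_iff₀ (sub_pos.2 hyx)] at hslope
    linarith

theorem mul_sub_half_mul_sq_le {c : ℝ} (hc : 0 < c) (a d : ℝ) :
    a * d - c / 2 * d ^ 2 ≤ a ^ 2 / (2 * c) := by
  rw [le_div_iff₀ (by positivity)]
  nlinarith [sq_nonneg (c * d - a)]

theorem bddAbove_range_W {Ψ : ℝ → ℝ} (hΨ : ConvexOn ℝ univ Ψ) {Γ : ℝ} (hΓ : 0 < Γ) (g x : ℝ) :
    BddAbove (range fun d => W d g x Γ Ψ) := by
  set s := derivWithin Ψ (Ioi x) x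
  refine ⟨(g + s) ^ 2 / (2 * Γ), ?_⟩
  rintro _ ⟨d, rfl⟩
  have hsupport : Ψ x + s * d ≤ Ψ (x + d) := by
    simpa using hΨ.add_rightDeriv_mul_sub_le (x := x) (y := x + d) (by simp) (mem_univ _)
  have hquad := mul_sub_half_mul_sq_le hΓ (-(g + s)) d
  rw [neg_sq] at hquad
  simp only [W]
  linarith

theorem W_le_three_halves_W_two_thirds {Ψ : ℝ → ℝ} (hΨ : ConvexOn ℝ univ Ψ) {Γ : ℝ} (hΓ : 0 < Γ)
    (x g₁ g₂ d : ℝ) :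
    W d g₂ x Γ Ψ ≤ 3 / 2 * W (2 / 3 * d) g₁ x Γ Ψ + 2 / Γ * (g₁ - g₂) ^ 2 := by
  have hconv : Ψ (x + 2 / 3 * d) ≤ 1 / 3 * Ψ x + 2 / 3 * Ψ (x + d) := by
    have := hΨ.2 (mem_univ x) (mem_univ (x + d)) (by norm_num : (0 : ℝ) ≤ 1 / 3)
      (by norm_num : (0 : ℝ) ≤ 2 / 3) (by norm_num)
    rwa [smul_eq_mul, smul_eq_mul, smul_eq_mul, smul_eq_mul,
      show 1 / 3 * x + 2 / 3 * (x + d) = x + 2 / 3 * d by ring] at this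
  have hquad : (g₁ - g₂) * d - Γ / 3 / 2 * d ^ 2 ≤ 2 / Γ * (g₁ - g₂) ^ 2 :=
    calc _ ≤ (g₁ - g₂) ^ 2 / (2 * (Γ / 3)) := mul_sub_half_mul_sq_le (by positivity) _ _
      _ = 3 / 2 / Γ * (g₁ - g₂) ^ 2 := by field_simp
      _ ≤ 2 / Γ * (g₁ - g₂) ^ 2 := by gcongr; norm_num
  simp only [W]
  linarith

theorem What_le_three_halves_What_add {Ψ : ℝ → ℝ} (hΨ : ConvexOn ℝ univ Ψ) {Γ : ℝ} (hΓ : 0 < Γ)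
    (x g₁ g₂ : ℝ) :
    What g₂ x Γ Ψ ≤ 3 / 2 * What g₁ x Γ Ψ + 2 / Γ * (g₁ - g₂) ^ 2 :=
  ciSup_le fun d => (W_le_three_halves_W_two_thirds hΨ hΓ x g₁ g₂ d).trans <| by
    gcongr
    exact le_ciSup (bddAbove_range_W hΨ hΓ g₁ x) _

/-- For convex `Ψ`, `Γ > 0`, any `x` and any `g₁, g₂`:
`Ŵ(g₂,x,Γ,Ψ) ≤ (3/2)·Ŵ(g₁,x,Γ,Ψ) + (2/Γ)·(g₁-g₂)²`, or equivalently,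
`Ŵ(g₁,x,Γ,Ψ) ≥ (2/3)·Ŵ(g₂,x,Γ,Ψ) - (4/(3Γ))·(g₁-g₂)²`. -/
theorem What_shift (Ψ : ℝ → ℝ) (hΨ : ConvexOn ℝ Set.univ Ψ)
    (Γ : ℝ) (hΓ : 0 < Γ) (x g₁ g₂ : ℝ) :
    What g₂ x Γ Ψ ≤ 3 / 2 * What g₁ x Γ Ψ + 2 / Γ * (g₁ - g₂) ^ 2 ∧
    What g₁ x Γ Ψ ≥ 2 / 3 * What g₂ x Γ Ψ - 4 / (3 * Γ) * (g₁ - g₂) ^ 2 := by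
  have hshift := What_le_three_halves_What_add hΨ hΓ x g₁ g₂
  refine ⟨hshift, ?_⟩
  have hcoeff : 4 / (3 * Γ) = 2 / 3 * (2 / Γ) := by ring
  rw [hcoeff]
  linarith
end

section
/- Progress of a single proximal coordinate update, second inequality: let j be a coordinate and suppose Γ_j ≥ L_j, where L_j is a constant such that |∇_j f(x + r·e_j) − ∇_j f(x)| ≤ L_j·|r| for all x ∈ ℝⁿ and r ∈ ℝ. Fix x ∈ ℝⁿ, let g := ∇_j f(x), let g̃ ∈ ℝ be arbitrary, set d̃ := d̂(g̃, x_j, Γ_j, Ψ_j), and let x' := x + d̃·e_j. Then F(x) − F(x') ≥ Ŵ(g, x_j, Γ_j, Ψ_j) − (1/Γ_j)·(g − g̃)². -/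
/-- The `j`-th partial derivative (coordinate of the gradient) of `f` at `x`. -/
noncomputable def grad {n : ℕ} (f : (Fin n → ℝ) → ℝ) (x : Fin n → ℝ) (j : Fin n) : ℝ :=
  fderiv ℝ f x (Pi.single j 1)

/-!
The update direction `d̃` maximizes the `Γ`-strongly concave function `W(·, g̃)`, so it is within
`Γ/2 · (d - d̃)²` of optimal at every `d`; since `W(·, g)` and `W(·, g̃)` differ by the linear
function `-(g - g̃)·d`, completing the square gives `Ŵ(g) ≤ W(d̃, g) + (g - g̃)² / (2Γ)`.
On the other hand the coordinate-wise Lipschitz bound on `∇ⱼ f` yields the descent lemma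
`f(x + d̃ eⱼ) ≤ f(x) + g d̃ + Lⱼ/2 · d̃²`, and with `Γ ≥ Lⱼ` this says `F(x) - F(x') ≥ W(d̃, g)`.
-/

open Set Filter Topology

theorem UniformConcaveOn.add_le_of_isMaxOn {E : Type*} [NormedAddCommGroup E] [NormedSpace ℝ E]
    {s : Set E} {φ : ℝ → ℝ} {f : E → ℝ} (hf : UniformConcaveOn s φ f) {x y : E}
    (hx : x ∈ s) (hy : y ∈ s) (hmax : IsMaxOn f s x) :
    f y + φ ‖x - y‖ ≤ f x := by
  have hsegment : ∀ t ∈ Ioo (0 : ℝ) 1, (1 - t) * φ ‖x - y‖ ≤ f x - f y := by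
    rintro t ⟨ht0, ht1⟩
    have hconc := hf.2 hx hy (sub_nonneg.2 ht1.le) ht0.le (sub_add_cancel 1 t)
    have hle := hmax (hf.1 hx hy (sub_nonneg.2 ht1.le) ht0.le (sub_add_cancel 1 t))
    simp only [smul_eq_mul] at hconc
    replace hle : f ((1 - t) • x + t • y) ≤ f x := hle
    refine le_of_mul_le_mul_left ?_ ht0
    linarith
  have hlim : Tendsto (fun t : ℝ => (1 - t) * φ ‖x - y‖) (𝓝[>] 0) (𝓝 (φ ‖x - y‖)) := by
    have hcont : Continuous fun t : ℝ => (1 - t) * φ ‖x - y‖ := by fun_prop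
    simpa using (hcont.tendsto 0).mono_left nhdsWithin_le_nhds
  linarith [le_of_tendsto hlim (eventually_of_mem (Ioo_mem_nhdsGT one_pos) hsegment)]

theorem le_add_deriv_mul_add_sq_of_abs_deriv_sub_le {φ φ' : ℝ → ℝ} {L : ℝ}
    (hφ : ∀ r, HasDerivAt φ (φ' r) r) (hL : ∀ r, |φ' r - φ' 0| ≤ L * |r|) (t : ℝ) :
    φ t ≤ φ 0 + φ' 0 * t + L / 2 * t ^ 2 := by
  set h : ℝ → ℝ := fun r => φ r - φ' 0 * r - L / 2 * r ^ 2
  have hh : ∀ r, HasDerivAt h (φ' r - φ' 0 - L * r) r := fun r => by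
    refine (((hφ r).sub ((hasDerivAt_id' r).const_mul (φ' 0))).sub
      ((hasDerivAt_pow 2 r).const_mul (L / 2))).congr_deriv ?_
    norm_num
    ring
  have hcont : Continuous h := continuous_iff_continuousAt.2 fun r => (hh r).continuousAt
  -- `h' c` has the sign of `-c`, so by the mean value theorem `h` peaks at `0`
  have hsign : ∀ c, (φ' c - φ' 0 - L * c) * c ≤ 0 := fun c => by
    have : (φ' c - φ' 0) * c ≤ L * c ^ 2 := calc
      (φ' c - φ' 0) * c ≤ |φ' c - φ' 0| * |c| := by rw [← abs_mul]; exact le_abs_self _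
      _ ≤ L * |c| * |c| := mul_le_mul_of_nonneg_right (hL c) (abs_nonneg c)
      _ = L * c ^ 2 := by rw [mul_assoc, ← sq, sq_abs]
    linarith
  suffices h t ≤ h 0 by simp only [h] at this; linarith
  rcases lt_trichotomy t 0 with ht | rfl | ht
  · obtain ⟨c, ⟨-, hc⟩, hslope⟩ :=
      exists_hasDerivAt_eq_slope h _ ht hcont.continuousOn fun r _ => hh r
    rw [eq_div_iff (by linarith)] at hslope
    nlinarith [hsign c]
  · exact le_rfl
  · obtain ⟨c, ⟨hc, -⟩, hslope⟩ :=
      exists_hasDerivAt_eq_slope h _ ht hcont.continuousOn fun r _ => hh r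
    rw [eq_div_iff (by linarith)] at hslope
    nlinarith [hsign c]

theorem strongConcaveOn_W {Ψ : ℝ → ℝ} (hΨ : ConvexOn ℝ univ Ψ) (g x Γ : ℝ) :
    StrongConcaveOn univ Γ fun d => W d g x Γ Ψ := by
  rw [strongConcaveOn_iff_convex]
  refine ((((-g) • LinearMap.id : ℝ →ₗ[ℝ] ℝ).concaveOn convex_univ).add_const (Ψ x)).sub
    (hΨ.translate_right x) |>.congr fun d _ => ?_
  simp only [W, Real.norm_eq_abs, sq_abs, Pi.sub_apply, Pi.add_apply, Function.comp_apply,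
    LinearMap.smul_apply, LinearMap.id_apply, smul_eq_mul]
  ring

theorem What_le_W_add_of_isMaxOn {Ψ : ℝ → ℝ} (hΨ : ConvexOn ℝ univ Ψ) {g g' x Γ d' : ℝ}
    (hΓ : 0 < Γ) (hd' : IsMaxOn (fun d => W d g' x Γ Ψ) univ d') :
    What g x Γ Ψ ≤ W d' g x Γ Ψ + (g - g') ^ 2 / (2 * Γ) := by
  refine ciSup_le fun d => ?_
  have hstrong := (strongConcaveOn_W hΨ g' x Γ).add_le_of_isMaxOn (mem_univ d') (mem_univ d) hd'
  have hsquare : (g - g') * (d' - d) - Γ / 2 * (d' - d) ^ 2 ≤ (g - g') ^ 2 / (2 * Γ) := by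
    rw [le_div_iff₀ (by positivity)]
    nlinarith [sq_nonneg (Γ * (d' - d) - (g - g'))]
  simp only [W, Real.norm_eq_abs, sq_abs] at hstrong ⊢
  linarith

theorem Differentiable.hasDerivAt_comp_add_smul {E F : Type*} [NormedAddCommGroup E]
    [NormedSpace ℝ E] [NormedAddCommGroup F] [NormedSpace ℝ F] {f : E → F}
    (hf : Differentiable ℝ f) (x v : E) (r : ℝ) :
    HasDerivAt (fun r : ℝ => f (x + r • v)) (fderiv ℝ f (x + r • v) v) r := by
  have hline : HasDerivAt (fun r : ℝ => x + r • v) v r := by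
    simpa using ((hasDerivAt_id' r).smul_const v).const_add x
  exact (hf _).hasFDerivAt.comp_hasDerivAt r hline

theorem sum_apply_add_smul_single {ι : Type*} [Fintype ι] [DecidableEq ι] (Ψ : ι → ℝ → ℝ)
    (x : ι → ℝ) (j : ι) (d : ℝ) :
    ∑ k, Ψ k ((x + d • (Pi.single j 1 : ι → ℝ)) k) =
      ∑ k, Ψ k (x k) + (Ψ j (x j + d) - Ψ j (x j)) := by
  rw [← sub_eq_iff_eq_add', ← Finset.sum_sub_distrib, Fintype.sum_eq_single j fun k hk => ?_]
  · simp
  · simp [hk]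

theorem single_update_progress_two_general {n : ℕ}
    (f : (Fin n → ℝ) → ℝ) (hf : Differentiable ℝ f)
    (Ψ : Fin n → ℝ → ℝ) (hΨ : ∀ k, ConvexOn ℝ Set.univ (Ψ k))
    (F : (Fin n → ℝ) → ℝ) (hF : ∀ y, F y = f y + ∑ k, Ψ k (y k))
    (j : Fin n) (Lj Γj : ℝ)
    (hLj : ∀ (x : Fin n → ℝ) (r : ℝ),
      |grad f (x + r • (Pi.single j 1 : Fin n → ℝ)) j - grad f x j| ≤ Lj * |r|)
    (hΓpos : 0 < Γj) (hΓL : Γj ≥ Lj)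
    (x : Fin n → ℝ) (gtilde dtilde : ℝ)
    (hd : IsMaxOn (fun d : ℝ => W d gtilde (x j) Γj (Ψ j)) Set.univ dtilde) :
    F x - F (x + dtilde • (Pi.single j 1 : Fin n → ℝ)) ≥
      What (grad f x j) (x j) Γj (Ψ j) - 1 / Γj * (grad f x j - gtilde) ^ 2 := by
  set g := grad f x j
  have hdescent : f (x + dtilde • Pi.single j 1) ≤ f x + g * dtilde + Lj / 2 * dtilde ^ 2 := by
    simpa [g, grad] using le_add_deriv_mul_add_sq_of_abs_deriv_sub_le
      (hf.hasDerivAt_comp_add_smul x (Pi.single j 1))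
      (fun r => by simpa [grad] using hLj x r) dtilde
  have hWhat := What_le_W_add_of_isMaxOn (g := g) (hΨ j) hΓpos hd
  have hsquare : (g - gtilde) ^ 2 / (2 * Γj) ≤ 1 / Γj * (g - gtilde) ^ 2 := by
    rw [one_div_mul_eq_div]
    exact div_le_div_of_nonneg_left (sq_nonneg _) hΓpos (by linarith)
  have hquadratic : Lj * dtilde ^ 2 ≤ Γj * dtilde ^ 2 :=
    mul_le_mul_of_nonneg_right hΓL (sq_nonneg dtilde)
  rw [hF, hF, sum_apply_add_smul_single]
  simp only [W] at hWhat
  linarith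

/-- Progress of a single proximal coordinate update, second inequality:
for `Γⱼ ≥ Lⱼ`, with `g = ∇ⱼ f(x)`, `g̃` arbitrary, `d̃ = d̂(g̃, xⱼ, Γⱼ, Ψⱼ)` and
`x' = x + d̃·eⱼ`, we have `F(x) - F(x') ≥ Ŵ(g, xⱼ, Γⱼ, Ψⱼ) - (1/Γⱼ)·(g - g̃)²`. -/
theorem single_update_progress_two {n : ℕ}
    (f : (Fin n → ℝ) → ℝ) (hf : Differentiable ℝ f) (hfc : ConvexOn ℝ Set.univ f)
    (Ψ : Fin n → ℝ → ℝ) (hΨ : ∀ k, ConvexOn ℝ Set.univ (Ψ k))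
    (F : (Fin n → ℝ) → ℝ) (hF : ∀ y, F y = f y + ∑ k, Ψ k (y k))
    (j : Fin n) (Lj Γj : ℝ)
    (hLj : ∀ (x : Fin n → ℝ) (r : ℝ),
      |grad f (x + r • (Pi.single j 1 : Fin n → ℝ)) j - grad f x j| ≤ Lj * |r|)
    (hΓpos : 0 < Γj) (hΓL : Γj ≥ Lj)
    (x : Fin n → ℝ) (gtilde dtilde : ℝ)
    (hd : IsMaxOn (fun d : ℝ => W d gtilde (x j) Γj (Ψ j)) Set.univ dtilde) :
    F x - F (x + dtilde • (Pi.single j 1 : Fin n → ℝ)) ≥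
      What (grad f x j) (x j) Γj (Ψ j) - 1 / Γj * (grad f x j - gtilde) ^ 2 :=
  single_update_progress_two_general f hf Ψ hΨ F hF j Lj Γj hLj hΓpos hΓL x gtilde dtilde hd
end

section
/- Strongly convex progress lower bound: suppose f is strongly convex with parameter μ_f > 0 and F is strongly convex with parameter μ_F > 0 (i.e., F − (μ_F/2)‖·‖² is convex and f − (μ_f/2)‖·‖² is convex), the minimum value of F is 0, and Γ ≥ μ_f. Then for every x ∈ ℝⁿ, Σ_{k=1}^n Ŵ(∇_k f(x), x_k, Γ, Ψ_k) ≥ (μ_F/(μ_F + Γ − μ_f))·F(x). -/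
open Set

lemma exists_subgradient_of_convexOn {Ψ : ℝ → ℝ} (hΨ : ConvexOn ℝ univ Ψ) (x : ℝ) :
    ∃ s, ∀ y, Ψ x + s * (y - x) ≤ Ψ y := by
  have hx : x ∈ interior univ := by simp
  refine ⟨derivWithin Ψ (Ioi x) x, fun y => ?_⟩
  rcases lt_trichotomy y x with hyx | rfl | hxy
  · have h := (hΨ.slope_le_leftDeriv_of_mem_interior (mem_univ y) hx hyx).trans
      (hΨ.leftDeriv_le_rightDeriv_of_mem_interior hx)
    rw [slope_def_field, div_le_iff₀ (sub_pos.2 hyx)] at h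
    linarith
  · simp
  · have h := hΨ.rightDeriv_le_slope_of_mem_interior hx (mem_univ y) hxy
    rw [slope_def_field, le_div_iff₀ (sub_pos.2 hxy)] at h
    linarith

lemma W_le_of_subgradient {Ψ : ℝ → ℝ} {g x s Γ : ℝ} (hs : ∀ y, Ψ x + s * (y - x) ≤ Ψ y)
    (hΓ : 0 < Γ) (d : ℝ) : W d g x Γ Ψ ≤ (g + s) ^ 2 / (2 * Γ) := by
  have := hs (x + d)
  rw [W, le_div_iff₀ (by positivity)]
  nlinarith [sq_nonneg (g + s + Γ * d)]

/-- `⨆` of a family that is not bounded above is `0`, so the bound from a subgradient is needed. -/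
lemma W_le_What {Ψ : ℝ → ℝ} (hΨ : ConvexOn ℝ univ Ψ) {Γ : ℝ} (hΓ : 0 < Γ) (d g x : ℝ) :
    W d g x Γ Ψ ≤ What g x Γ Ψ := by
  obtain ⟨s, hs⟩ := exists_subgradient_of_convexOn hΨ x
  exact le_ciSup ⟨_, forall_mem_range.2 (W_le_of_subgradient hs hΓ)⟩ d

lemma ConvexOn.add_fderiv_le {E : Type*} [NormedAddCommGroup E] [NormedSpace ℝ E] {g : E → ℝ}
    {s : Set E} {L : E →L[ℝ] ℝ} {x y : E} (hg : ConvexOn ℝ s g) (hx : x ∈ s) (hy : y ∈ s)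
    (hL : HasFDerivAt g L x) : g x + L (y - x) ≤ g y := by
  let ℓ : ℝ →ᵃ[ℝ] E := AffineMap.lineMap x y
  have hline : HasDerivAt (g ∘ ℓ) (L (y - x)) 0 :=
    HasFDerivAt.comp_hasDerivAt (0 : ℝ) (by simpa [ℓ] using hL) AffineMap.hasDerivAt_lineMap
  have h := (hg.comp_affineMap ℓ).le_slope_of_hasDerivAt
    (by simpa [ℓ] using hx) (by simpa [ℓ] using hy) one_pos hline
  simp only [ℓ, slope_def_field, Function.comp_apply, AffineMap.lineMap_apply_one,
    AffineMap.lineMap_apply_zero, sub_zero, div_one] at h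
  linarith

lemma hasFDerivAt_sum_sq {ι : Type*} [Fintype ι] (x : ι → ℝ) :
    HasFDerivAt (fun y : ι → ℝ => ∑ k, y k ^ 2)
      (∑ k, (2 * x k) • ContinuousLinearMap.proj (R := ℝ) (φ := fun _ : ι => ℝ) k) x := by
  refine HasFDerivAt.fun_sum fun k _ => ?_
  simpa [smul_smul, mul_comm] using
    (ContinuousLinearMap.proj (R := ℝ) (φ := fun _ : ι => ℝ) k).hasFDerivAt.pow 2

lemma add_fderiv_add_sum_sq_le_of_convexOn {ι : Type*} [Fintype ι] {f : (ι → ℝ) → ℝ}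
    {L : (ι → ℝ) →L[ℝ] ℝ} {μ : ℝ} {x : ι → ℝ}
    (hconv : ConvexOn ℝ univ (fun y : ι → ℝ => f y - μ / 2 * ∑ k, y k ^ 2))
    (hf : HasFDerivAt f L x) (z : ι → ℝ) :
    f x + L (z - x) + μ / 2 * ∑ k, (z k - x k) ^ 2 ≤ f z := by
  have h := hconv.add_fderiv_le (mem_univ x) (mem_univ z)
    (hf.sub ((hasFDerivAt_sum_sq x).const_mul (μ / 2)))
  have hsq : ∑ k, (z k - x k) ^ 2 = ∑ k, z k ^ 2 - ∑ k, x k ^ 2 - ∑ k, 2 * x k * (z k - x k) := by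
    rw [← Finset.sum_sub_distrib, ← Finset.sum_sub_distrib]
    exact Finset.sum_congr rfl fun k _ => by ring
  simp only [sub_apply, smul_apply, sum_apply, ContinuousLinearMap.proj_apply, Pi.sub_apply,
    smul_eq_mul] at h
  rw [hsq]
  linarith

lemma combo_le_sub_sum_sq_of_convexOn {ι : Type*} [Fintype ι] {F : (ι → ℝ) → ℝ} {μ t : ℝ}
    (hconv : ConvexOn ℝ univ (fun y : ι → ℝ => F y - μ / 2 * ∑ k, y k ^ 2))
    (ht₀ : 0 ≤ t) (ht₁ : t ≤ 1) (x y : ι → ℝ) :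
    F ((1 - t) • x + t • y) ≤
      (1 - t) * F x + t * F y - μ / 2 * (t * (1 - t) * ∑ k, (x k - y k) ^ 2) := by
  have h := hconv.2 (mem_univ x) (mem_univ y) (sub_nonneg.2 ht₁) ht₀ (by ring)
  have hsq : (1 - t) * ∑ k, x k ^ 2 + t * ∑ k, y k ^ 2 - ∑ k, ((1 - t) • x + t • y) k ^ 2
      = t * (1 - t) * ∑ k, (x k - y k) ^ 2 := by
    simp only [Finset.mul_sum, ← Finset.sum_add_distrib, ← Finset.sum_sub_distrib]
    refine Finset.sum_congr rfl fun k _ => ?_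
    simp only [Pi.add_apply, Pi.smul_apply, smul_eq_mul]
    ring
  simp only [smul_eq_mul] at h
  linear_combination h - μ / 2 * hsq

lemma fderiv_apply_eq_sum_grad {n : ℕ} (f : (Fin n → ℝ) → ℝ) (x v : Fin n → ℝ) :
    fderiv ℝ f x v = ∑ k, grad f x k * v k := by
  have hsingle (k : Fin n) : (fun j => if k = j then (1 : ℝ) else 0) = Pi.single k 1 := by
    ext j; simp [Pi.single_apply, eq_comm]
  simpa [grad, hsingle, mul_comm] using
    (fderiv ℝ f x).toLinearMap.pi_apply_eq_sum_univ v

lemma sum_W_eq {n : ℕ} (g x v : Fin n → ℝ) (Γ : ℝ) (Ψ : Fin n → ℝ → ℝ) :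
    ∑ k, W (v k) (g k) (x k) Γ (Ψ k) =
      -∑ k, g k * v k - Γ / 2 * ∑ k, v k ^ 2 + ∑ k, Ψ k (x k) - ∑ k, Ψ k ((x + v) k) := by
  simp only [W, Finset.mul_sum, Finset.sum_add_distrib, Finset.sum_sub_distrib,
    Finset.sum_neg_distrib, Pi.add_apply]

theorem strongly_convex_progress_general {n : ℕ}
    (f : (Fin n → ℝ) → ℝ) (hf : Differentiable ℝ f)
    (Ψ : Fin n → ℝ → ℝ) (hΨ : ∀ k, ConvexOn ℝ Set.univ (Ψ k))
    (F : (Fin n → ℝ) → ℝ) (hF : ∀ y, F y = f y + ∑ k, Ψ k (y k))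
    (μf μF : ℝ) (hμF : 0 < μF)
    (hscf : ConvexOn ℝ Set.univ (fun y : Fin n → ℝ => f y - μf / 2 * ∑ k, y k ^ 2))
    (hscF : ConvexOn ℝ Set.univ (fun y : Fin n → ℝ => F y - μF / 2 * ∑ k, y k ^ 2))
    (hFattained : ∃ y, F y = 0)
    (Γ : ℝ) (hΓpos : 0 < Γ) (hΓμ : Γ ≥ μf) (x : Fin n → ℝ) :
    ∑ k, What (grad f x k) (x k) Γ (Ψ k) ≥ μF / (μF + Γ - μf) * F x := by
  obtain ⟨w, hw⟩ := hFattained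
  have hden : 0 < μF + Γ - μf := by linarith
  set α := μF / (μF + Γ - μf)
  have hα₀ : 0 ≤ α := by positivity
  have hα₁ : α ≤ 1 := (div_le_one hden).2 (by linarith)
  have hα : μF * (1 - α) = (Γ - μf) * α := by
    have : α * (μF + Γ - μf) = μF := div_mul_cancel₀ _ hden.ne'
    linarith
  set z := (1 - α) • x + α • w
  set S := ∑ k, (x k - w k) ^ 2
  have hdist : ∑ k, (z k - x k) ^ 2 = α ^ 2 * S := by
    rw [Finset.mul_sum]
    refine Finset.sum_congr rfl fun k _ => ?_
    simp only [z, Pi.add_apply, Pi.smul_apply, smul_eq_mul]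
    ring
  have hWhat : ∑ k, W ((z - x) k) (grad f x k) (x k) Γ (Ψ k) ≤
      ∑ k, What (grad f x k) (x k) Γ (Ψ k) :=
    Finset.sum_le_sum fun k _ => W_le_What (hΨ k) hΓpos _ _ _
  rw [sum_W_eq, add_sub_cancel] at hWhat
  have hf_first_order := add_fderiv_add_sum_sq_le_of_convexOn hscf (hf x).hasFDerivAt z
  rw [fderiv_apply_eq_sum_grad] at hf_first_order
  have hF_combo := combo_le_sub_sum_sq_of_convexOn hscF hα₀ hα₁ x w
  simp only [Pi.sub_apply] at hWhat hf_first_order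
  rw [hF x, hF z, hw] at hF_combo
  rw [hF x]
  linear_combination
    hWhat + hf_first_order + hF_combo + (Γ - μf) / 2 * hdist - α * S / 2 * hα

/-- Strongly convex progress lower bound: if `f` is `μ_f`-strongly convex, `F` is
`μ_F`-strongly convex, the minimum value of `F` is `0`, and `Γ ≥ μ_f`, then for every
`x`, `Σ_k Ŵ(∇_k f(x), x_k, Γ, Ψ_k) ≥ (μ_F/(μ_F + Γ - μ_f))·F(x)`. -/
theorem strongly_convex_progress {n : ℕ} (hn : 0 < n)
    (f : (Fin n → ℝ) → ℝ) (hf : Differentiable ℝ f) (hfc : ConvexOn ℝ Set.univ f)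
    (Ψ : Fin n → ℝ → ℝ) (hΨ : ∀ k, ConvexOn ℝ Set.univ (Ψ k))
    (F : (Fin n → ℝ) → ℝ) (hF : ∀ y, F y = f y + ∑ k, Ψ k (y k))
    (μf μF : ℝ) (hμf : 0 < μf) (hμF : 0 < μF)
    (hscf : ConvexOn ℝ Set.univ (fun y : Fin n → ℝ => f y - μf / 2 * ∑ k, y k ^ 2))
    (hscF : ConvexOn ℝ Set.univ (fun y : Fin n → ℝ => F y - μF / 2 * ∑ k, y k ^ 2))
    (hFnonneg : ∀ y, 0 ≤ F y) (hFattained : ∃ y, F y = 0)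
    (Γ : ℝ) (hΓpos : 0 < Γ) (hΓμ : Γ ≥ μf) (x : Fin n → ℝ) :
    ∑ k, What (grad f x k) (x k) Γ (Ψ k) ≥ μF / (μF + Γ - μf) * F x :=
  strongly_convex_progress_general f hf Ψ hΨ F hF μf μF hμF hscf hscF hFattained Γ hΓpos hΓμ x
end

section
/- Doubling-interval bound for cyclic updates: let n ≥ 2 and let f : ℝⁿ → ℝ be differentiable and L-Lipschitz-smooth, i.e., ‖∇f(x + Δx) − ∇f(x)‖ ≤ L‖Δx‖ for all x, Δx ∈ ℝⁿ. Let (x^i)_{i≥0} be a sequence in ℝⁿ such that x^i = x^{i−1} + Δ_i·e_{k_i} for reals Δ_i, where the update order is cyclic: k_{i+n} = k_i for all i ≥ 1 and {k_1, …, k_n} = {1, …, n}. Then for every t ≥ 2n, Σ_{i=t−2n+1}^{t} Σ_{j=max{t−2n+1, i−n+1}}^{i} ( ∇_{k_i} f(x^{j−1}) − ∇_{k_i} f(x^{i−1}) )² ≤ 2n·⌈log₂ n⌉²·L²·Σ_{i=t−2n+1}^{t} (Δ_i)². -/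
open Finset

def roundDown (d v : ℕ) : ℕ := v / d * d

def roundUp (d u : ℕ) : ℕ := roundDown d (u + d - 1)

section Rounding

variable {d : ℕ}

lemma dvd_roundDown (d v : ℕ) : d ∣ roundDown d v := Nat.dvd_mul_left d _

lemma roundDown_le (d v : ℕ) : roundDown d v ≤ v := Nat.div_mul_le_self v d

lemma lt_roundDown_add (hd : 0 < d) (v : ℕ) : v < roundDown d v + d := Nat.lt_div_mul_add hd

lemma le_roundDown_of_dvd (hd : 0 < d) {M v : ℕ} (hM : d ∣ M) (h : M ≤ v) : M ≤ roundDown d v :=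
  Nat.le_of_lt_add_of_dvd (h.trans_lt (lt_roundDown_add hd v)) hM (dvd_roundDown d v)

lemma roundDown_eq_of_dvd {c v : ℕ} (hc : d ∣ c) (h₁ : c ≤ v) (h₂ : v < c + d) :
    roundDown d v = c :=
  le_antisymm (Nat.le_of_lt_add_of_dvd ((roundDown_le d v).trans_lt h₂) (dvd_roundDown d v) hc)
    (le_roundDown_of_dvd (by omega) hc h₁)

lemma dvd_roundUp (d u : ℕ) : d ∣ roundUp d u := dvd_roundDown d _

lemma le_roundUp (hd : 0 < d) (u : ℕ) : u ≤ roundUp d u := by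
  have := lt_roundDown_add hd (u + d - 1)
  unfold roundUp; omega

lemma roundUp_lt_add (hd : 0 < d) (u : ℕ) : roundUp d u < u + d := by
  have := roundDown_le d (u + d - 1)
  unfold roundUp; omega

lemma roundUp_le_of_dvd (hd : 0 < d) {M u : ℕ} (hM : d ∣ M) (h : u ≤ M) : roundUp d u ≤ M :=
  Nat.le_of_lt_add_of_dvd (by have := roundUp_lt_add hd u; omega) (dvd_roundUp d u) hM

lemma roundUp_eq_of_dvd {c u : ℕ} (hc : d ∣ c) (h₁ : u ≤ c) (h₂ : c < u + d) : roundUp d u = c :=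
  le_antisymm (roundUp_le_of_dvd (by omega) hc h₁)
    (Nat.le_of_lt_add_of_dvd (h₂.trans_le (by have := le_roundUp (d := d) (by omega) u; omega))
      hc (dvd_roundUp d u))

@[simp] lemma roundDown_one (v : ℕ) : roundDown 1 v = v := by simp [roundDown]

@[simp] lemma roundUp_one (u : ℕ) : roundUp 1 u = u := by simp [roundUp]

lemma eq_or_eq_add_of_dvd {a b : ℕ} (ha : d ∣ a) (hb : d ∣ b) (h₁ : a ≤ b) (h₂ : b < a + 2 * d) :
    b = a ∨ b = a + d := by
  rcases h₁.eq_or_lt with rfl | hlt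
  · exact Or.inl rfl
  · have h₃ : a + d ≤ b := Nat.le_of_lt_add_of_dvd (by omega) (Nat.dvd_add_self_right.2 ha) hb
    have h₄ : b ≤ a + d := Nat.le_of_lt_add_of_dvd (by omega) hb (Nat.dvd_add_self_right.2 ha)
    omega

lemma roundUp_le_roundUp_two_mul (hd : 0 < d) (u : ℕ) : roundUp d u ≤ roundUp (2 * d) u :=
  roundUp_le_of_dvd hd ((Nat.dvd_mul_left d 2).trans (dvd_roundUp _ u)) (le_roundUp (by omega) u)

lemma roundUp_two_mul_le (hd : 0 < d) (u : ℕ) : roundUp (2 * d) u ≤ roundUp d u + d := by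
  set a := roundUp d u
  have h₁ := lt_roundDown_add (d := 2 * d) (by omega) (a + d)
  have h₂ : a ≤ roundDown (2 * d) (a + d) :=
    Nat.le_of_lt_add_of_dvd (by omega) (dvd_roundUp d u)
      ((Nat.dvd_mul_left d 2).trans (dvd_roundDown _ _))
  calc roundUp (2 * d) u ≤ roundDown (2 * d) (a + d) :=
        roundUp_le_of_dvd (by omega) (dvd_roundDown _ _) ((le_roundUp hd u).trans h₂)
    _ ≤ a + d := roundDown_le _ _

lemma roundDown_le_roundDown_two_mul_add (hd : 0 < d) (v : ℕ) :
    roundDown d v ≤ roundDown (2 * d) v + d := by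
  have h₁ := lt_roundDown_add (d := 2 * d) (by omega) v
  have h₂ := roundDown_le d v
  exact Nat.le_of_lt_add_of_dvd (by omega) (dvd_roundDown d v)
    (Nat.dvd_add ((Nat.dvd_mul_left d 2).trans (dvd_roundDown _ _)) dvd_rfl)

lemma roundDown_two_mul_roundDown (hd : 0 < d) (v : ℕ) :
    roundDown (2 * d) (roundDown d v) = roundDown (2 * d) v := by
  have h₁ := lt_roundDown_add (d := 2 * d) (by omega) v
  have h₂ := roundDown_le_roundDown_two_mul_add hd v
  have h₃ : roundDown (2 * d) v ≤ roundDown d v :=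
    le_roundDown_of_dvd hd ((Nat.dvd_mul_left d 2).trans (dvd_roundDown _ _)) (roundDown_le _ _)
  exact roundDown_eq_of_dvd (dvd_roundDown _ _) h₃ (by omega)

end Rounding

section DyadicDecomposition

variable (h : ℕ → ℝ) (s p q : ℕ)

def ascentTerm : ℝ :=
  if 2 ^ (s + 1) ≤ q - p then h (roundUp (2 ^ s) p) - h (roundUp (2 ^ (s + 1)) p) else 0

def bridgeTerm : ℝ :=
  if 2 ^ s ≤ q - p ∧ q - p < 2 ^ (s + 1) then h (roundUp (2 ^ s) p) - h (roundDown (2 ^ s) q)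
  else 0

def descentTerm : ℝ :=
  if 2 ^ (s + 1) ≤ q - p then h (roundDown (2 ^ (s + 1)) q) - h (roundDown (2 ^ s) q) else 0

variable {s p q}

lemma ascentTerm_eq_zero (hpq : q - p < 2 ^ (s + 1)) : ascentTerm h s p q = 0 :=
  if_neg (by omega)

lemma descentTerm_eq_zero (hpq : q - p < 2 ^ (s + 1)) : descentTerm h s p q = 0 :=
  if_neg (by omega)

lemma sub_eq_sum_dyadic {K : ℕ} (hpq : p < q) (hK : q - p < 2 ^ K) :
    h p - h q = ∑ s ∈ range K, ascentTerm h s p q +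
      ∑ s ∈ range K, (bridgeTerm h s p q + descentTerm h s p q) := by
  set S := Nat.log 2 (q - p)
  have hS : 2 ^ S ≤ q - p ∧ q - p < 2 ^ (S + 1) := (Nat.log_eq_iff (by omega)).1 rfl
  have hSK : S < K := (Nat.pow_lt_pow_iff_right (by norm_num)).1 (hS.1.trans_lt hK)
  have hlt : ∀ s, 2 ^ (s + 1) ≤ q - p ↔ s ∈ range S := fun s => by
    rw [mem_range, ← Nat.le_log_iff_pow_le (by norm_num) (by omega)]; omega
  have hsub : range S ⊆ range K := range_subset_range.2 hSK.le
  have hasc : ∑ s ∈ range K, ascentTerm h s p q = h p - h (roundUp (2 ^ S) p) := by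
    simp only [ascentTerm, hlt, ← sum_filter, filter_mem_eq_inter, inter_eq_right.2 hsub]
    simpa using sum_range_sub' (fun s => h (roundUp (2 ^ s) p)) S
  have hdesc : ∑ s ∈ range K, descentTerm h s p q = h (roundDown (2 ^ S) q) - h q := by
    simp only [descentTerm, hlt, ← sum_filter, filter_mem_eq_inter, inter_eq_right.2 hsub]
    simpa using sum_range_sub (fun s => h (roundDown (2 ^ s) q)) S
  have hbridge : ∑ s ∈ range K, bridgeTerm h s p q =
      h (roundUp (2 ^ S) p) - h (roundDown (2 ^ S) q) := by
    rw [sum_eq_single_of_mem S (mem_range.2 hSK), bridgeTerm, if_pos hS]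
    intro s _ hs
    rw [bridgeTerm, if_neg]
    rwa [← Nat.log_eq_iff (by omega), eq_comm]
  rw [sum_add_distrib, hasc, hbridge, hdesc]
  ring

lemma bridgeTerm_add_descentTerm_sq : (bridgeTerm h s p q + descentTerm h s p q) ^ 2 =
    bridgeTerm h s p q ^ 2 + descentTerm h s p q ^ 2 := by
  unfold bridgeTerm descentTerm
  split_ifs <;> first | omega | ring

lemma sq_sub_le_sum_dyadic {K : ℕ} (hpq : p ≤ q) (hK : q - p < 2 ^ K) :
    (h p - h q) ^ 2 ≤ 2 * K * ∑ s ∈ range K,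
      (ascentTerm h s p q ^ 2 + bridgeTerm h s p q ^ 2 + descentTerm h s p q ^ 2) := by
  rcases hpq.eq_or_lt with rfl | hpq
  · rw [sub_self, zero_pow two_ne_zero]
    positivity
  rw [sub_eq_sum_dyadic h hpq hK]
  set P := ∑ s ∈ range K, ascentTerm h s p q
  set Q := ∑ s ∈ range K, (bridgeTerm h s p q + descentTerm h s p q)
  have hP : P ^ 2 ≤ K * ∑ s ∈ range K, ascentTerm h s p q ^ 2 := by
    simpa using sq_sum_le_card_mul_sum_sq (s := range K) (f := fun s => ascentTerm h s p q)
  have hQ : Q ^ 2 ≤ K * ∑ s ∈ range K, (bridgeTerm h s p q ^ 2 + descentTerm h s p q ^ 2) := by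
    have := sq_sum_le_card_mul_sum_sq (s := range K)
      (f := fun s => bridgeTerm h s p q + descentTerm h s p q)
    simpa only [card_range, bridgeTerm_add_descentTerm_sq] using this
  simp only [add_assoc, sum_add_distrib] at hQ ⊢
  nlinarith [sq_nonneg (P - Q)]

end DyadicDecomposition

-- `G i p` models the coordinate of the gradient updated at step `i`, taken at `x^p`, and `μ m`
-- the squared step `L² Δ_m²`.
def WindowBounded (n : ℕ) (G : ℕ → ℕ → ℝ) (μ : ℕ → ℝ) : Prop :=
  ∀ (I : Finset ℕ) (w A B : ℕ), 1 ≤ w → I ⊆ Ico w (w + n) → A ≤ B → B ≤ A + n →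
    ∑ i ∈ I, (G i A - G i B) ^ 2 ≤ ∑ m ∈ Ioc A B, μ m

section CoordinateUpdates

variable {n : ℕ}

lemma injOn_Ico_of_cyclic {idx : ℕ → Fin n} (hcyc : ∀ i, 1 ≤ i → idx (i + n) = idx i)
    (hcover : ∀ c : Fin n, ∃ i, 1 ≤ i ∧ i ≤ n ∧ idx i = c) {w : ℕ} (hw : 1 ≤ w) :
    Set.InjOn idx (Set.Ico w (w + n)) := by
  have hper : Function.Periodic (fun i => idx (i + 1)) n := fun i => by
    simpa [add_right_comm] using hcyc (i + 1) (by omega)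
  have hinj : Function.Injective fun r : Fin n => idx (r + 1) := by
    refine Finite.injective_iff_surjective.2 fun c => ?_
    obtain ⟨i, hi₁, hi₂, rfl⟩ := hcover c
    exact ⟨⟨i - 1, by omega⟩, by simp only; congr 1; omega⟩
  intro i hi i' hi' h
  simp only [Set.mem_Ico] at hi hi'
  have hn : 0 < n := by omega
  have hmod : (i - 1) % n = (i' - 1) % n := by
    have key : ∀ j, 1 ≤ j → idx j = idx ((j - 1) % n + 1) := fun j hj => by
      rw [hper.map_mod_nat (j - 1)]; congr 1; omega
    have := @hinj ⟨(i - 1) % n, Nat.mod_lt _ hn⟩ ⟨(i' - 1) % n, Nat.mod_lt _ hn⟩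
      (by simp only; rw [← key i (by omega), ← key i' (by omega), h])
    exact Fin.mk.inj_iff.1 this
  have := Nat.ModEq.eq_of_abs_lt (m := n) hmod (by rw [abs_lt]; omega)
  omega

lemma eq_add_sum_Ioc {x : ℕ → Fin n → ℝ} {idx : ℕ → Fin n} {Δ : ℕ → ℝ}
    (hx : ∀ i, 1 ≤ i → x i = x (i - 1) + Δ i • (Pi.single (idx i) 1 : Fin n → ℝ))
    {A B : ℕ} (hAB : A ≤ B) :
    x B = x A + ∑ m ∈ Ioc A B, Pi.single (idx m) (Δ m) := by
  induction B, hAB using Nat.le_induction with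
  | base => simp
  | succ B hAB ih =>
    rw [hx (B + 1) (by omega), Nat.add_sub_cancel, ih, sum_Ioc_succ_top hAB, ← Pi.single_smul,
      smul_eq_mul, mul_one, add_assoc]

lemma sum_sq_sum_single {e : ℕ → Fin n} {M : Finset ℕ} (he : Set.InjOn e M) (c : ℕ → ℝ) :
    ∑ k, (∑ m ∈ M, Pi.single (e m) (c m) : Fin n → ℝ) k ^ 2 = ∑ m ∈ M, c m ^ 2 := by
  set v : Fin n → ℝ := ∑ m ∈ M, Pi.single (e m) (c m) with hv
  have hval : ∀ m ∈ M, v (e m) = c m := fun m hm => by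
    rw [hv, Finset.sum_apply, sum_eq_single m (fun m' hm' hne => ?_) (absurd hm),
      Pi.single_eq_same]
    exact Pi.single_eq_of_ne (fun h => hne (he hm' hm h.symm)) _
  have hzero : ∀ k ∉ M.image e, v k = 0 := fun k hk => by
    rw [hv, Finset.sum_apply]
    refine sum_eq_zero fun m hm => Pi.single_eq_of_ne (fun h => hk ?_) _
    exact h ▸ mem_image_of_mem e hm
  calc ∑ k, v k ^ 2 = ∑ k ∈ M.image e, v k ^ 2 :=
        (sum_subset (subset_univ _) fun k _ hk => by rw [hzero k hk, sq, mul_zero]).symm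
    _ = ∑ m ∈ M, c m ^ 2 := by rw [sum_image he]; exact sum_congr rfl fun m hm => by rw [hval m hm]

lemma sum_comp_le_sum_univ {e : ℕ → Fin n} {I : Finset ℕ} (he : Set.InjOn e I) {F : Fin n → ℝ}
    (hF : ∀ k, 0 ≤ F k) : ∑ i ∈ I, F (e i) ≤ ∑ k, F k := by
  rw [← sum_image he]
  exact sum_le_univ_sum_of_nonneg hF

lemma sum_sq_grad_sub_le {f : (Fin n → ℝ) → ℝ} {L : ℝ}
    (hL : ∀ x y : Fin n → ℝ,
      Real.sqrt (∑ k, (grad f (x + y) k - grad f x k) ^ 2) ≤ L * Real.sqrt (∑ k, y k ^ 2))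
    (p q : Fin n → ℝ) :
    ∑ k, (grad f p k - grad f q k) ^ 2 ≤ L ^ 2 * ∑ k, (p k - q k) ^ 2 := by
  have h := hL q (p - q)
  rw [add_sub_cancel] at h
  have h' := pow_le_pow_left₀ (Real.sqrt_nonneg _) h 2
  rwa [mul_pow, Real.sq_sqrt (by positivity), Real.sq_sqrt (by positivity)] at h'

lemma windowBounded_grad {f : (Fin n → ℝ) → ℝ} {L : ℝ}
    (hL : ∀ x y : Fin n → ℝ,
      Real.sqrt (∑ k, (grad f (x + y) k - grad f x k) ^ 2) ≤ L * Real.sqrt (∑ k, y k ^ 2))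
    {x : ℕ → Fin n → ℝ} {idx : ℕ → Fin n} {Δ : ℕ → ℝ}
    (hx : ∀ i, 1 ≤ i → x i = x (i - 1) + Δ i • (Pi.single (idx i) 1 : Fin n → ℝ))
    (hidx : ∀ w, 1 ≤ w → Set.InjOn idx (Set.Ico w (w + n))) :
    WindowBounded n (fun i p => grad f (x p) (idx i)) (fun m => L ^ 2 * Δ m ^ 2) := by
  intro I w A B hw hI hAB hBA
  have hpath : Set.InjOn idx (Ioc A B) := (hidx (A + 1) (by omega)).mono fun m hm => by
    simp only [coe_Ioc, Set.mem_Ioc, Set.mem_Ico] at hm ⊢; omega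
  calc ∑ i ∈ I, (grad f (x A) (idx i) - grad f (x B) (idx i)) ^ 2
      ≤ ∑ k, (grad f (x B) k - grad f (x A) k) ^ 2 := by
        simp_rw [← neg_sub (grad f (x B) _), neg_sq]
        exact sum_comp_le_sum_univ (F := fun k => (grad f (x B) k - grad f (x A) k) ^ 2)
          ((hidx w hw).mono (by simpa using coe_subset.2 hI)) fun k => sq_nonneg _
    _ ≤ L ^ 2 * ∑ k, (x B k - x A k) ^ 2 := sum_sq_grad_sub_le hL _ _
    _ = ∑ m ∈ Ioc A B, L ^ 2 * Δ m ^ 2 := by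
        simp_rw [eq_add_sum_Ioc hx hAB, Pi.add_apply, add_sub_cancel_left,
          sum_sq_sum_single hpath, mul_sum]

end CoordinateUpdates

def windowPairSum (n lo t : ℕ) (F : ℕ → ℕ → ℝ) : ℝ :=
  ∑ i ∈ Icc lo t, ∑ j ∈ Icc (max lo (i - n + 1)) i, F i j

section WindowPairSum

variable {n lo t : ℕ}

lemma windowPairSum_comm (hlo : 1 ≤ lo) (F : ℕ → ℕ → ℝ) :
    windowPairSum n lo t F = ∑ j ∈ Icc lo t, ∑ i ∈ Icc j (min (j + n - 1) t), F i j :=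
  sum_comm' fun i j => by simp only [mem_Icc]; omega

lemma windowPairSum_mono {F F' : ℕ → ℕ → ℝ}
    (h : ∀ i j, lo ≤ j → j ≤ i → i ≤ t → i < j + n → F i j ≤ F' i j) :
    windowPairSum n lo t F ≤ windowPairSum n lo t F' :=
  sum_le_sum fun i hi => sum_le_sum fun j hj => by
    simp only [mem_Icc] at hi hj
    exact h i j (by omega) (by omega) (by omega) (by omega)

lemma windowPairSum_eq_zero {F : ℕ → ℕ → ℝ}
    (h : ∀ i j, lo ≤ j → j ≤ i → i ≤ t → i < j + n → F i j = 0) :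
    windowPairSum n lo t F = 0 :=
  sum_eq_zero fun i hi => sum_eq_zero fun j hj => by
    simp only [mem_Icc] at hi hj
    exact h i j (by omega) (by omega) (by omega) (by omega)

lemma windowPairSum_add (F F' : ℕ → ℕ → ℝ) :
    windowPairSum n lo t (fun i j => F i j + F' i j) =
      windowPairSum n lo t F + windowPairSum n lo t F' := by
  simp only [windowPairSum, sum_add_distrib]

lemma windowPairSum_mul_sum (c : ℝ) (S : Finset ℕ) (F : ℕ → ℕ → ℕ → ℝ) :
    windowPairSum n lo t (fun i j => c * ∑ s ∈ S, F s i j) =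
      c * ∑ s ∈ S, windowPairSum n lo t (F s) := by
  simp only [windowPairSum, mul_sum]
  exact (sum_congr rfl fun i _ => sum_comm).trans sum_comm

end WindowPairSum

lemma card_filter_le_of_roundUp_pred_eq {d a : ℕ} (hd : 0 < d) {J : Finset ℕ} (hJ : ∀ j ∈ J, 1 ≤ j)
    {P : ℕ → Prop} [DecidablePred P] (hP : ∀ j ∈ J, P j → roundUp d (j - 1) = a) :
    #{j ∈ J | P j} ≤ d := by
  calc #{j ∈ J | P j} ≤ #(Ioc (a + 1 - d) (a + 1)) := card_le_card fun j hj => by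
        obtain ⟨hjJ, hPj⟩ := mem_filter.1 hj
        have h₁ := le_roundUp hd (j - 1)
        have h₂ := roundUp_lt_add hd (j - 1)
        have := hJ j hjJ
        rw [hP j hjJ hPj] at h₁ h₂
        simp only [mem_Ioc]
        omega
    _ ≤ d := by simp only [Nat.card_Ioc]; omega

namespace WindowBounded

variable {n lo t : ℕ} {G : ℕ → ℕ → ℝ} {μ : ℕ → ℝ}

theorem sum_sum_le_of_card_cover_le (hG : WindowBounded n G μ) (hμ : ∀ m, 0 ≤ μ m)
    {J W : Finset ℕ} {I : ℕ → Finset ℕ} {A B : ℕ → ℕ} {c : ℕ}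
    (hI : ∀ j ∈ J, ∃ w, 1 ≤ w ∧ I j ⊆ Ico w (w + n))
    (hAB : ∀ j ∈ J, (I j).Nonempty → A j ≤ B j ∧ B j ≤ A j + n ∧ Ioc (A j) (B j) ⊆ W)
    (hc : ∀ m ∈ W, #{j ∈ J | m ∈ Ioc (A j) (B j)} ≤ c) :
    ∑ j ∈ J, ∑ i ∈ I j, (G i (A j) - G i (B j)) ^ 2 ≤ c * ∑ m ∈ W, μ m := by
  have hj : ∀ j ∈ J, ∑ i ∈ I j, (G i (A j) - G i (B j)) ^ 2 ≤
      ∑ m ∈ W with m ∈ Ioc (A j) (B j), μ m := fun j hj => by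
    rcases (I j).eq_empty_or_nonempty with h | h
    · rw [h, sum_empty]
      exact sum_nonneg fun m _ => hμ m
    obtain ⟨hAB, hBA, hW⟩ := hAB j hj h
    obtain ⟨w, hw, hIw⟩ := hI j hj
    rw [filter_mem_eq_inter, inter_eq_right.2 hW]
    exact hG _ w _ _ hw hIw hAB hBA
  calc _ ≤ ∑ j ∈ J, ∑ m ∈ W with m ∈ Ioc (A j) (B j), μ m := sum_le_sum hj
    _ = ∑ m ∈ W, ∑ j ∈ J with m ∈ Ioc (A j) (B j), μ m :=
        sum_comm' fun j m => by simp only [mem_filter]; tauto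
    _ ≤ ∑ m ∈ W, c * μ m := sum_le_sum fun m hm => by
        rw [sum_const, nsmul_eq_mul]
        exact mul_le_mul_of_nonneg_right (by exact_mod_cast hc m hm) (hμ m)
    _ = c * ∑ m ∈ W, μ m := (mul_sum ..).symm

theorem windowPairSum_ascentTerm_le (hG : WindowBounded n G μ) (hμ : ∀ m, 0 ≤ μ m)
    (hlo : 1 ≤ lo) (s : ℕ) :
    windowPairSum n lo t (fun i j => ascentTerm (G i) s (j - 1) (i - 1) ^ 2) ≤
      2 ^ s * ∑ m ∈ Icc lo t, μ m := by
  have hd : 0 < 2 ^ s := by positivity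
  rw [windowPairSum_comm hlo]
  simp only [ascentTerm, pow_succ' 2 s, ite_pow, zero_pow two_ne_zero, ← sum_filter]
  refine (hG.sum_sum_le_of_card_cover_le hμ (c := 2 ^ s) ?_ ?_ ?_).trans (by push_cast; rfl)
  · intro j hj
    refine ⟨j, by simp only [mem_Icc] at hj; omega, fun i hi => ?_⟩
    simp only [mem_filter, mem_Icc, mem_Ico] at hi hj ⊢
    omega
  · rintro j hj ⟨i, hi⟩
    simp only [mem_filter, mem_Icc] at hi hj
    have h₁ := le_roundUp hd (j - 1)
    have h₂ := roundUp_lt_add (d := 2 * 2 ^ s) (by omega) (j - 1)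
    have h₃ := roundUp_le_roundUp_two_mul hd (j - 1)
    have h₄ := roundUp_two_mul_le hd (j - 1)
    refine ⟨h₃, by omega, fun m hm => ?_⟩
    simp only [mem_Ioc, mem_Icc] at hm ⊢
    omega
  · intro m hm
    refine card_filter_le_of_roundUp_pred_eq hd (fun j hj => by simp only [mem_Icc] at hj; omega)
      (a := roundUp (2 * 2 ^ s) m - 2 ^ s) fun j _ hj => ?_
    simp only [mem_Ioc] at hj
    set B := roundUp (2 * 2 ^ s) (j - 1)
    have hB : B = roundUp (2 * 2 ^ s) m :=
      (roundUp_eq_of_dvd (dvd_roundUp _ _) hj.2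
        (by have := roundUp_lt_add (d := 2 * 2 ^ s) (by omega) (j - 1)
            have := le_roundUp hd (j - 1); omega)).symm
    have h₁ : roundUp (2 ^ s) (j - 1) + 2 ^ s ≤ B :=
      Nat.le_of_lt_add_of_dvd (by omega) (Nat.dvd_add_self_right.2 (dvd_roundUp _ _))
        ((Nat.dvd_mul_left _ 2).trans (dvd_roundUp _ _))
    have h₂ := roundUp_two_mul_le hd (j - 1)
    omega

theorem windowPairSum_bridgeTerm_le (hG : WindowBounded n G μ) (hμ : ∀ m, 0 ≤ μ m)
    (hlo : 1 ≤ lo) (s : ℕ) :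
    windowPairSum n lo t (fun i j => bridgeTerm (G i) s (j - 1) (i - 1) ^ 2) ≤
      2 ^ s * ∑ m ∈ Icc lo t, μ m := by
  have hd : 0 < 2 ^ s := by positivity
  rw [windowPairSum_comm hlo]
  -- `roundDown (2 ^ s) (i - 1)` is `roundUp (2 ^ s) (j - 1)` plus `0` or `2 ^ s`, and the
  -- term vanishes in the first case
  have hterm : ∀ j ∈ Icc lo t, ∀ i ∈ Icc j (min (j + n - 1) t),
      bridgeTerm (G i) s (j - 1) (i - 1) ^ 2 =
        if 2 ^ s ≤ i - j ∧ i - j < 2 * 2 ^ s ∧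
            roundDown (2 ^ s) (i - 1) = roundUp (2 ^ s) (j - 1) + 2 ^ s then
          (G i (roundUp (2 ^ s) (j - 1)) - G i (roundUp (2 ^ s) (j - 1) + 2 ^ s)) ^ 2
        else 0 := by
    intro j hj i hi
    simp only [mem_Icc] at hj hi
    rw [bridgeTerm, pow_succ' 2 s]
    by_cases hc : 2 ^ s ≤ i - 1 - (j - 1) ∧ i - 1 - (j - 1) < 2 * 2 ^ s
    · have h₀ := le_roundUp hd (j - 1)
      have h₁ := roundUp_lt_add hd (j - 1)
      have h₂ := roundDown_le (2 ^ s) (i - 1)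
      rcases eq_or_eq_add_of_dvd (dvd_roundUp _ (j - 1)) (dvd_roundDown _ (i - 1))
        (le_roundDown_of_dvd hd (dvd_roundUp _ _) (by omega)) (by omega) with h | h
      · rw [if_pos hc, h, sub_self, if_neg (by omega)]
        simp
      · rw [if_pos hc, h, if_pos (by omega)]
    · rw [if_neg hc, if_neg (by omega)]
      simp
  rw [sum_congr rfl fun j hj => sum_congr rfl (hterm j hj)]
  simp only [← sum_filter]
  refine (hG.sum_sum_le_of_card_cover_le hμ (c := 2 ^ s) ?_ ?_ ?_).trans (by push_cast; rfl)
  · intro j hj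
    refine ⟨j, by simp only [mem_Icc] at hj; omega, fun i hi => ?_⟩
    simp only [mem_filter, mem_Icc, mem_Ico] at hi hj ⊢
    omega
  · rintro j hj ⟨i, hi⟩
    simp only [mem_filter, mem_Icc] at hi hj
    have h₁ := le_roundUp hd (j - 1)
    have h₂ := roundDown_le (2 ^ s) (i - 1)
    refine ⟨by omega, by omega, fun m hm => ?_⟩
    simp only [mem_Ioc, mem_Icc] at hm ⊢
    omega
  · intro m hm
    refine card_filter_le_of_roundUp_pred_eq hd (fun j hj => by simp only [mem_Icc] at hj; omega)
      (a := roundDown (2 ^ s) (m - 1)) fun j _ hj => ?_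
    simp only [mem_Ioc] at hj
    exact (roundDown_eq_of_dvd (dvd_roundUp _ _) (by omega) (by omega)).symm

theorem sum_sq_roundDown_sub_le (hG : WindowBounded n G μ) (hμ : ∀ m, 0 ≤ μ m)
    {s : ℕ} (hs : 2 * 2 ^ s ≤ n) :
    ∑ i ∈ Icc lo t with lo + 2 * 2 ^ s ≤ i,
        (G i (roundDown (2 * 2 ^ s) (i - 1)) - G i (roundDown (2 ^ s) (i - 1))) ^ 2 ≤
      ∑ m ∈ Icc lo t, μ m := by
  have hd : 0 < 2 ^ s := by positivity
  set W := {i ∈ Icc lo t | lo + 2 * 2 ^ s ≤ i}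
  set φ : ℕ → ℕ := fun i => roundDown (2 ^ s) (i - 1)
  rw [← sum_fiberwise_of_maps_to (g := φ) fun i hi => mem_image_of_mem φ hi]
  have hfib : ∀ c ∈ W.image φ, ∑ i ∈ W with φ i = c,
      (G i (roundDown (2 * 2 ^ s) (i - 1)) - G i (φ i)) ^ 2 =
        ∑ i ∈ W with φ i = c, (G i (roundDown (2 * 2 ^ s) c) - G i c) ^ 2 :=
    fun c _ => sum_congr rfl fun i hi => by
      rw [← (mem_filter.1 hi).2, roundDown_two_mul_roundDown hd]
  rw [sum_congr rfl hfib]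
  refine (hG.sum_sum_le_of_card_cover_le hμ (c := 1) (W := Icc lo t) ?_ ?_ ?_).trans (by simp)
  · intro c _
    refine ⟨c + 1, by omega, fun i hi => ?_⟩
    simp only [W, φ, mem_filter, mem_Icc, mem_Ico] at hi ⊢
    have h₁ := roundDown_le (2 ^ s) (i - 1)
    have h₂ := lt_roundDown_add hd (i - 1)
    omega
  · rintro c - ⟨i, hi⟩
    simp only [W, φ, mem_filter, mem_Icc] at hi
    obtain ⟨⟨⟨hi₁, hi₂⟩, hi₃⟩, rfl⟩ := hi
    have h₁ := roundDown_le (2 ^ s) (i - 1)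
    have h₂ := roundDown_le_roundDown_two_mul_add hd (i - 1)
    have h₃ := lt_roundDown_add (d := 2 * 2 ^ s) (by omega) (i - 1)
    have h₄ := roundDown_le (2 * 2 ^ s) (roundDown (2 ^ s) (i - 1))
    rw [roundDown_two_mul_roundDown hd] at h₄ ⊢
    refine ⟨h₄, by omega, fun m hm => ?_⟩
    simp only [mem_Ioc, mem_Icc] at hm ⊢
    omega
  · intro m _
    -- an interval `(roundDown (2 ^ (s + 1)) c, c]` containing `m` forces `c = roundUp (2 ^ s) m`
    have key : ∀ c ∈ {c ∈ W.image φ | m ∈ Ioc (roundDown (2 * 2 ^ s) c) c},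
        c = roundUp (2 ^ s) m := by
      intro c hc
      simp only [φ, mem_filter, mem_image, mem_Ioc] at hc
      obtain ⟨⟨i, -, rfl⟩, hm₁, hm₂⟩ := hc
      have := roundDown_le_roundDown_two_mul_add hd (i - 1)
      rw [roundDown_two_mul_roundDown hd] at hm₁
      exact (roundUp_eq_of_dvd (dvd_roundDown _ _) hm₂ (by omega)).symm
    exact card_le_one.2 fun a ha b hb => by rw [key a ha, key b hb]

-- the descent term does not depend on `j`, and at most `n - 2 ^ (s + 1)` values of `j` contribute
theorem windowPairSum_descentTerm_le (hG : WindowBounded n G μ) (hμ : ∀ m, 0 ≤ μ m)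
    {s : ℕ} (hs : 2 ^ (s + 1) ≤ n) :
    windowPairSum n lo t (fun i j => descentTerm (G i) s (j - 1) (i - 1) ^ 2) ≤
      (n - 2 ^ (s + 1)) * ∑ m ∈ Icc lo t, μ m := by
  rw [pow_succ' 2 s] at hs ⊢
  have hn : (0 : ℝ) ≤ n - 2 * 2 ^ s := by
    rw [sub_nonneg]
    exact_mod_cast hs
  refine le_trans ?_ (mul_le_mul_of_nonneg_left (hG.sum_sq_roundDown_sub_le hμ hs) hn)
  rw [mul_sum, sum_filter]
  refine sum_le_sum fun i hi => ?_
  simp only [descentTerm, pow_succ' 2 s, ite_pow, zero_pow two_ne_zero, ← sum_filter,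
    sum_const, nsmul_eq_mul]
  simp only [mem_Icc] at hi
  split_ifs with h
  · refine mul_le_mul_of_nonneg_right ?_ (sq_nonneg _)
    have hcard :
        #{j ∈ Icc (max lo (i - n + 1)) i | 2 * 2 ^ s ≤ i - 1 - (j - 1)} + 2 * 2 ^ s ≤ n :=
      calc _ ≤ #(Icc (max lo (i - n + 1)) (i - 2 * 2 ^ s)) + 2 * 2 ^ s := by
            gcongr
            intro j hj
            simp only [mem_filter, mem_Icc] at hj ⊢
            omega
        _ ≤ n := by simp only [Nat.card_Icc]; omega
    rw [le_sub_iff_add_le]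
    exact_mod_cast hcard
  · rw [filter_false_of_mem fun j hj => by simp only [mem_Icc] at hj; omega]
    simp

theorem windowPairSum_scale_le (hG : WindowBounded n G μ) (hμ : ∀ m, 0 ≤ μ m) (hlo : 1 ≤ lo)
    {s : ℕ} (hs : 2 ^ s ≤ n) :
    windowPairSum n lo t (fun i j => ascentTerm (G i) s (j - 1) (i - 1) ^ 2 +
        bridgeTerm (G i) s (j - 1) (i - 1) ^ 2 + descentTerm (G i) s (j - 1) (i - 1) ^ 2) ≤
      n * ∑ m ∈ Icc lo t, μ m := by
  rw [windowPairSum_add, windowPairSum_add]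
  have hbridge := hG.windowPairSum_bridgeTerm_le (t := t) hμ hlo s
  have hX : 0 ≤ ∑ m ∈ Icc lo t, μ m := sum_nonneg fun m _ => hμ m
  by_cases hs' : 2 ^ (s + 1) ≤ n
  · have hascent := hG.windowPairSum_ascentTerm_le (t := t) hμ hlo s
    have hdescent := hG.windowPairSum_descentTerm_le (t := t) (lo := lo) hμ hs'
    rw [pow_succ] at hdescent
    linarith
  · have hzero : ∀ T : (ℕ → ℝ) → ℕ → ℕ → ℕ → ℝ,
        (∀ h p q, q - p < 2 ^ (s + 1) → T h s p q = 0) →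
          windowPairSum n lo t (fun i j => T (G i) s (j - 1) (i - 1) ^ 2) = 0 :=
      fun T hT => windowPairSum_eq_zero fun i j _ _ _ hij => by
        rw [hT _ _ _ (by omega), sq, mul_zero]
    rw [hzero _ fun h p q => ascentTerm_eq_zero h, hzero _ fun h p q => descentTerm_eq_zero h]
    have : (2 : ℝ) ^ s ≤ n := by exact_mod_cast hs
    nlinarith

theorem windowPairSum_sq_sub_le (hG : WindowBounded n G μ) (hμ : ∀ m, 0 ≤ μ m) (hlo : 1 ≤ lo) :
    windowPairSum n lo t (fun i j => (G i (j - 1) - G i (i - 1)) ^ 2) ≤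
      2 * n * (Nat.clog 2 n) ^ 2 * ∑ m ∈ Icc lo t, μ m := by
  set K := Nat.clog 2 n
  have hK : n ≤ 2 ^ K := Nat.le_pow_clog one_lt_two n
  calc _ ≤ windowPairSum n lo t (fun i j => 2 * K * ∑ s ∈ range K,
          (ascentTerm (G i) s (j - 1) (i - 1) ^ 2 + bridgeTerm (G i) s (j - 1) (i - 1) ^ 2 +
            descentTerm (G i) s (j - 1) (i - 1) ^ 2)) :=
        windowPairSum_mono fun i j _ hji _ hij => sq_sub_le_sum_dyadic _ (by omega) (by omega)
    _ = 2 * K * ∑ s ∈ range K, windowPairSum n lo t (fun i j =>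
          ascentTerm (G i) s (j - 1) (i - 1) ^ 2 + bridgeTerm (G i) s (j - 1) (i - 1) ^ 2 +
            descentTerm (G i) s (j - 1) (i - 1) ^ 2) := windowPairSum_mul_sum _ _ _
    _ ≤ 2 * K * ∑ s ∈ range K, n * ∑ m ∈ Icc lo t, μ m := by
        gcongr with s hs
        exact hG.windowPairSum_scale_le hμ hlo (Nat.pow_lt_of_lt_clog (mem_range.1 hs)).le
    _ = 2 * n * K ^ 2 * ∑ m ∈ Icc lo t, μ m := by
        rw [sum_const, card_range, nsmul_eq_mul]
        ring

end WindowBounded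

theorem doubling_interval_bound_general {n : ℕ}
    (f : (Fin n → ℝ) → ℝ) (L : ℝ)
    (hL : ∀ x y : Fin n → ℝ,
      Real.sqrt (∑ k, (grad f (x + y) k - grad f x k) ^ 2) ≤
        L * Real.sqrt (∑ k, y k ^ 2))
    (x : ℕ → Fin n → ℝ) (idx : ℕ → Fin n) (Δ : ℕ → ℝ)
    (hx : ∀ i : ℕ, 1 ≤ i → x i = x (i - 1) + Δ i • (Pi.single (idx i) 1 : Fin n → ℝ))
    (hcyc : ∀ i : ℕ, 1 ≤ i → idx (i + n) = idx i)
    (hcover : ∀ c : Fin n, ∃ i : ℕ, 1 ≤ i ∧ i ≤ n ∧ idx i = c) :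
    ∀ t : ℕ, 2 * n ≤ t →
      ∑ i ∈ Finset.Icc (t - 2 * n + 1) t,
          ∑ j ∈ Finset.Icc (max (t - 2 * n + 1) (i - n + 1)) i,
            (grad f (x (j - 1)) (idx i) - grad f (x (i - 1)) (idx i)) ^ 2 ≤
        2 * n * (Nat.clog 2 n : ℝ) ^ 2 * L ^ 2 *
          ∑ i ∈ Finset.Icc (t - 2 * n + 1) t, Δ i ^ 2 := by
  intro t _
  have hG := windowBounded_grad hL hx fun w hw => injOn_Ico_of_cyclic hcyc hcover hw
  have := hG.windowPairSum_sq_sub_le (fun m => by positivity) (t := t) (lo := t - 2 * n + 1)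
    (by omega)
  rwa [← mul_sum, ← mul_assoc] at this

/-- Doubling-interval bound for cyclic updates: for `n ≥ 2`, an `L`-Lipschitz-smooth
differentiable `f` (in the Euclidean norm), and a cyclically updated sequence
`x^i = x^{i-1} + Δᵢ·e_{kᵢ}`, for every `t ≥ 2n`,
`Σ_{i=t-2n+1}^{t} Σ_{j=max{t-2n+1, i-n+1}}^{i} (∇_{kᵢ} f(x^{j-1}) - ∇_{kᵢ} f(x^{i-1}))²
  ≤ 2n·⌈log₂ n⌉²·L²·Σ_{i=t-2n+1}^{t} Δᵢ²`. -/
theorem doubling_interval_bound {n : ℕ} (hn : 2 ≤ n)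
    (f : (Fin n → ℝ) → ℝ) (hf : Differentiable ℝ f) (L : ℝ)
    (hL : ∀ x y : Fin n → ℝ,
      Real.sqrt (∑ k, (grad f (x + y) k - grad f x k) ^ 2) ≤
        L * Real.sqrt (∑ k, y k ^ 2))
    (x : ℕ → Fin n → ℝ) (idx : ℕ → Fin n) (Δ : ℕ → ℝ)
    (hx : ∀ i : ℕ, 1 ≤ i → x i = x (i - 1) + Δ i • (Pi.single (idx i) 1 : Fin n → ℝ))
    (hcyc : ∀ i : ℕ, 1 ≤ i → idx (i + n) = idx i)
    (hcover : ∀ c : Fin n, ∃ i : ℕ, 1 ≤ i ∧ i ≤ n ∧ idx i = c) :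
    ∀ t : ℕ, 2 * n ≤ t →
      ∑ i ∈ Finset.Icc (t - 2 * n + 1) t,
          ∑ j ∈ Finset.Icc (max (t - 2 * n + 1) (i - n + 1)) i,
            (grad f (x (j - 1)) (idx i) - grad f (x (i - 1)) (idx i)) ^ 2 ≤
        2 * n * (Nat.clog 2 n : ℝ) ^ 2 * L ^ 2 *
          ∑ i ∈ Finset.Icc (t - 2 * n + 1) t, Δ i ^ 2 :=
  doubling_interval_bound_general f L hL x idx Δ hx hcyc hcover
end

section
/- Cyclic coordinate descent satisfies the amortized progress inequality: let n ≥ 2, suppose f is differentiable, L-Lipschitz-smooth (so |∇_j f(x + r·e_j) − ∇_j f(x)| ≤ L|r| for each j), and let Γ ≥ (4/√3)·L·⌈log₂ n⌉. Let (x^t)_{t≥0} be the cyclic coordinate descent sequence: k_{t+n} = k_t for all t ≥ 1, {k_1, …, k_n} = {1, …, n}, and x^t = x^{t−1} + d̂(∇_{k_t} f(x^{t−1}), x^{t−1}_{k_t}, Γ, Ψ_{k_t})·e_{k_t}. Then (a) F(x^t) ≤ F(x^{t−1}) for all t ≥ 1, and (b) for every t ≥ 2n, Σ_{i=t−2n+1}^{t}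 [F(x^{i−1}) − F(x^i)] ≥ (1/(3n))·Σ_{i=t−2n+1}^{t−n} Σ_{k=1}^n Ŵ(∇_k f(x^{i−1}), x_k^{i−1}, Γ, Ψ_k). -/
open Finset

/-!
Every step gains `b_t = W(d_t, …) ≥ (Γ/4)·d_t²` (concavity of `W` at the midpoint), and by the
one-dimensional descent lemma `F` drops by at least `b_t + (Γ - L)/2·d_t²`. In a window of `n`
consecutive steps each coordinate `k` is updated exactly once, at time `j_k`, and comparing the
proximal problem at the window's start with the one solved at `j_k` gives
`Ŵ_k ≤ 2 b_{j_k} + (∇_k f(x^{j_k - 1}) - ∇_k f(x^{t₀}))² / Γ`. The gradient drifts are controlled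
by dyadic chaining: along the binary expansion of `j_k - 1 - t₀` there are `⌈log₂ n⌉` levels; at
each level the relevant blocks of steps are disjoint and move along distinct coordinates, so
smoothness bounds the level's contribution by `L² Σ d_s²`. Cauchy–Schwarz over the levels gives
the factor `⌈log₂ n⌉²`, and the choice of `Γ` absorbs `⌈log₂ n⌉² L²/Γ · Σ d_s²` into `Σ b_s`.
-/

section Proximal

variable {Ψ : ℝ → ℝ} {Γ : ℝ}

lemma W_zero (g x : ℝ) : W 0 g x Γ Ψ = 0 := by simp [W]

lemma W_add_le_two_mul_W_half (hΨ : ConvexOn ℝ Set.univ Ψ) (g g' x y : ℝ) :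
    W y g x Γ Ψ + (g - g') * y + Γ * y ^ 2 / 4 ≤ 2 * W (y / 2) g' x Γ Ψ := by
  have hmid := hΨ.2 (Set.mem_univ x) (Set.mem_univ (x + y)) (by norm_num : (0 : ℝ) ≤ 1 / 2)
    (by norm_num : (0 : ℝ) ≤ 1 / 2) (by norm_num)
  rw [show (1 / 2 : ℝ) • x + (1 / 2 : ℝ) • (x + y) = x + y / 2 by simp only [smul_eq_mul]; ring]
    at hmid
  simp only [W, smul_eq_mul] at hmid ⊢
  linarith

variable {d g x : ℝ}

lemma W_nonneg_of_isMaxOn (hd : IsMaxOn (fun a => W a g x Γ Ψ) Set.univ d) : 0 ≤ W d g x Γ Ψ :=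
  W_zero (Γ := Γ) (Ψ := Ψ) g x ▸ hd (Set.mem_univ 0)

lemma mul_sq_le_W_of_isMaxOn (hΨ : ConvexOn ℝ Set.univ Ψ)
    (hd : IsMaxOn (fun a => W a g x Γ Ψ) Set.univ d) : Γ / 4 * d ^ 2 ≤ W d g x Γ Ψ := by
  have hmid := W_add_le_two_mul_W_half (Γ := Γ) hΨ g g x d
  have hmax : W (d / 2) g x Γ Ψ ≤ W d g x Γ Ψ := hd (Set.mem_univ _)
  rw [sub_self, zero_mul, add_zero] at hmid
  linarith

lemma What_le_of_isMaxOn (hΨ : ConvexOn ℝ Set.univ Ψ) (hΓ : 0 < Γ)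
    (hd : IsMaxOn (fun a => W a g x Γ Ψ) Set.univ d) (g' : ℝ) :
    What g' x Γ Ψ ≤ 2 * W d g x Γ Ψ + (g - g') ^ 2 / Γ := by
  refine ciSup_le fun y => ?_
  have hmid := W_add_le_two_mul_W_half (Γ := Γ) hΨ g' g x y
  have hmax : W (y / 2) g x Γ Ψ ≤ W d g x Γ Ψ := hd (Set.mem_univ _)
  have hsq : -((g' - g) * y) - Γ * y ^ 2 / 4 ≤ (g - g') ^ 2 / Γ := by
    rw [le_div_iff₀ hΓ]
    nlinarith [sq_nonneg (g - g' - Γ * y / 2)]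
  linarith

end Proximal

lemma le_add_mul_add_sq_of_abs_deriv_sub_le {φ φ' : ℝ → ℝ} {L : ℝ}
    (hφ : ∀ s, HasDerivAt φ (φ' s) s) (hφ' : ∀ s, |φ' s - φ' 0| ≤ L * |s|) (r : ℝ) :
    φ r ≤ φ 0 + φ' 0 * r + L / 2 * r ^ 2 := by
  set ψ : ℝ → ℝ := fun s => φ 0 + φ' 0 * s + L / 2 * s ^ 2 - φ s
  have hψ : ∀ s, HasDerivAt ψ (φ' 0 + L * s - φ' s) s := fun s =>
    ((((hasDerivAt_id s).const_mul (φ' 0)).const_add (φ 0)).add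
      ((hasDerivAt_pow 2 s).const_mul (L / 2))).sub (hφ s) |>.congr_deriv (by simp only [mul_one, Nat.add_one_sub_one, pow_one]; ring)
  have hψc : Continuous ψ := continuous_iff_continuousAt.2 fun s => (hψ s).continuousAt
  have hψ0 : ψ 0 = 0 := by simp [ψ]
  suffices 0 ≤ ψ r by simp only [ψ] at this; linarith
  rcases le_total 0 r with hr | hr
  · have hmono : MonotoneOn ψ (Set.Ici 0) :=
      monotoneOn_of_hasDerivWithinAt_nonneg (convex_Ici 0) hψc.continuousOn
        (fun s _ => (hψ s).hasDerivWithinAt) fun s hs => by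
          rw [interior_Ici] at hs
          have := abs_le.1 (hφ' s)
          rw [abs_of_pos hs] at this
          linarith [this.2]
    simpa [hψ0] using hmono Set.self_mem_Ici hr hr
  · have hanti : AntitoneOn ψ (Set.Iic 0) :=
      antitoneOn_of_hasDerivWithinAt_nonpos (convex_Iic 0) hψc.continuousOn
        (fun s _ => (hψ s).hasDerivWithinAt) fun s hs => by
          rw [interior_Iic] at hs
          have := abs_le.1 (hφ' s)
          rw [abs_of_neg hs] at this
          linarith [this.1]
    simpa [hψ0] using hanti hr Set.self_mem_Iic hr

def GradLipschitzWith {n : ℕ} (L : ℝ) (f : (Fin n → ℝ) → ℝ) : Prop :=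
  ∀ z y : Fin n → ℝ, ∑ k, (grad f (z + y) k - grad f z k) ^ 2 ≤ L ^ 2 * ∑ k, y k ^ 2

section LipschitzGradient

variable {n : ℕ} {f : (Fin n → ℝ) → ℝ} {L : ℝ}

lemma nonneg_of_sqrt_sum_sq_grad_sub_le (hn : n ≠ 0)
    (hL : ∀ x y : Fin n → ℝ,
      Real.sqrt (∑ k, (grad f (x + y) k - grad f x k) ^ 2) ≤ L * Real.sqrt (∑ k, y k ^ 2)) :
    0 ≤ L := by
  have h := hL 0 (Pi.single ⟨0, Nat.pos_of_ne_zero hn⟩ 1)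
  simp only [Pi.single_apply, ite_pow, one_pow, zero_pow two_ne_zero, sum_ite_eq', mem_univ,
    if_true, Real.sqrt_one, mul_one] at h
  exact (Real.sqrt_nonneg _).trans h

lemma gradLipschitzWith_of_sqrt_le
    (hL : ∀ x y : Fin n → ℝ,
      Real.sqrt (∑ k, (grad f (x + y) k - grad f x k) ^ 2) ≤ L * Real.sqrt (∑ k, y k ^ 2)) :
    GradLipschitzWith L f := fun z y => by
  have h := pow_le_pow_left₀ (Real.sqrt_nonneg _) (hL z y) 2
  rwa [mul_pow, Real.sq_sqrt (by positivity), Real.sq_sqrt (by positivity)] at h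

namespace GradLipschitzWith

lemma abs_grad_add_single_sub_le (hLf : GradLipschitzWith L f) (hL0 : 0 ≤ L)
    (z : Fin n → ℝ) (j : Fin n) (r : ℝ) :
    |grad f (z + r • Pi.single j 1) j - grad f z j| ≤ L * |r| := by
  have h := (single_le_sum (fun k _ => sq_nonneg (grad f (z + r • Pi.single j 1) k - grad f z k))
    (mem_univ j)).trans (hLf z (r • Pi.single j 1))
  simp only [Pi.smul_apply, Pi.single_apply, smul_eq_mul, mul_ite, mul_one, mul_zero, ite_pow,
    zero_pow two_ne_zero, sum_ite_eq', mem_univ, if_true] at h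
  rw [← abs_of_nonneg hL0, ← abs_mul]
  exact sq_le_sq.1 (by rwa [mul_pow])

lemma le_add_grad_mul_add_sq (hLf : GradLipschitzWith L f) (hf : Differentiable ℝ f)
    (hL0 : 0 ≤ L) (z : Fin n → ℝ) (j : Fin n) (r : ℝ) :
    f (z + r • Pi.single j 1) ≤ f z + grad f z j * r + L / 2 * r ^ 2 := by
  have hline : ∀ s : ℝ, HasDerivAt (fun s : ℝ => f (z + s • Pi.single j 1))
      (grad f (z + s • Pi.single j 1) j) s := fun s =>
    (hf _).hasFDerivAt.comp_hasDerivAt s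
      (((hasDerivAt_id s).smul_const (Pi.single j 1 : Fin n → ℝ)).const_add z |>.congr_deriv
        (one_smul _ _))
  simpa using le_add_mul_add_sq_of_abs_deriv_sub_le hline
    (fun s => by simpa using hLf.abs_grad_add_single_sub_le hL0 z j s) r

lemma W_add_mul_sq_le_sub_of_separable (hLf : GradLipschitzWith L f) (hf : Differentiable ℝ f)
    (hL0 : 0 ≤ L) {Ψ : Fin n → ℝ → ℝ} {F : (Fin n → ℝ) → ℝ}
    (hF : ∀ y, F y = f y + ∑ k, Ψ k (y k)) (Γ : ℝ) (z : Fin n → ℝ) (j : Fin n) (r : ℝ) :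
    W r (grad f z j) (z j) Γ (Ψ j) + (Γ - L) / 2 * r ^ 2 ≤ F z - F (z + r • Pi.single j 1) := by
  have hΨ : ∑ k, Ψ k (z k) - ∑ k, Ψ k ((z + r • Pi.single j 1 : Fin n → ℝ) k) =
      Ψ j (z j) - Ψ j (z j + r) := by
    rw [← sum_sub_distrib, Fintype.sum_eq_single j fun k hk => by simp [hk]]
    simp
  have hdesc := hLf.le_add_grad_mul_add_sq hf hL0 z j r
  rw [hF, hF]
  simp only [W]
  linarith

end GradLipschitzWith

end LipschitzGradient

lemma sum_sq_sum_smul_single_le {α ι : Type*} [Fintype ι] [DecidableEq ι] {κ : α → ι}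
    {S : Finset α} (hκ : Set.InjOn κ S) (w : α → ℝ) :
    ∑ k, (∑ s ∈ S, w s • (Pi.single (κ s) 1 : ι → ℝ)) k ^ 2 ≤ ∑ s ∈ S, w s ^ 2 := by
  have hcoord : ∀ k, (∑ s ∈ S, w s • (Pi.single (κ s) 1 : ι → ℝ)) k = ∑ s ∈ S with κ s = k, w s :=
    fun k => by simp [Finset.sum_apply, Pi.single_apply, sum_filter, eq_comm]
  calc ∑ k, (∑ s ∈ S, w s • (Pi.single (κ s) 1 : ι → ℝ)) k ^ 2
      = ∑ k, (∑ s ∈ S with κ s = k, w s) ^ 2 := by simp only [hcoord]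
    _ ≤ ∑ k, ∑ s ∈ S with κ s = k, w s ^ 2 := by
      gcongr with k
      have hcard : #{s ∈ S | κ s = k} ≤ 1 := card_le_one.2 fun a ha b hb =>
        hκ (mem_filter.1 ha).1 (mem_filter.1 hb).1
          ((mem_filter.1 ha).2.trans (mem_filter.1 hb).2.symm)
      refine sq_sum_le_card_mul_sum_sq.trans ?_
      exact mul_le_of_le_one_left (sum_nonneg fun _ _ => sq_nonneg _) (by exact_mod_cast hcard)
    _ = ∑ s ∈ S, w s ^ 2 := sum_fiberwise S κ _

lemma eq_add_sum_Ioc_of_eq_add {M : Type*} [AddCommMonoid M] {x u : ℕ → M}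
    (hx : ∀ t, 1 ≤ t → x t = x (t - 1) + u t) {a b : ℕ} (hab : a ≤ b) :
    x b = x a + ∑ s ∈ Ioc a b, u s := by
  induction b, hab using Nat.le_induction with
  | base => simp
  | succ b hab ih =>
    rw [hx (b + 1) (by omega), Nat.add_sub_cancel, ih, sum_Ioc_succ_top hab, add_assoc]

section CyclicOrder

variable {n : ℕ} {idx : ℕ → Fin n}

lemma idx_add_mul_of_cyclic (hcyc : ∀ t, 1 ≤ t → idx (t + n) = idx t) {t : ℕ} (ht : 1 ≤ t)
    (q : ℕ) : idx (t + q * n) = idx t := by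
  induction q with
  | zero => simp
  | succ q ih => rw [add_one_mul, ← add_assoc, hcyc _ (by omega), ih]

lemma bijOn_Ioc_of_cyclic (hcyc : ∀ t, 1 ≤ t → idx (t + n) = idx t)
    (hcover : ∀ c, ∃ i, 1 ≤ i ∧ i ≤ n ∧ idx i = c) (t₀ : ℕ) :
    Set.BijOn idx (Ioc t₀ (t₀ + n)) Set.univ := by
  have hsurj : Set.SurjOn idx (Ioc t₀ (t₀ + n)) Set.univ := by
    intro c _
    obtain ⟨i, hi1, hin, rfl⟩ := hcover c
    have hmod := Nat.mod_add_div' (t₀ + n - i) n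
    have hlt := Nat.mod_lt (t₀ + n - i) (by omega : 0 < n)
    refine ⟨i + (t₀ + n - i) / n * n, ?_, idx_add_mul_of_cyclic hcyc hi1 _⟩
    simp only [coe_Ioc, Set.mem_Ioc]
    omega
  refine ⟨fun _ _ => Set.mem_univ _, ?_, hsurj⟩
  refine injOn_of_surjOn_of_card_le (t := univ) idx (fun _ _ => mem_coe.2 (mem_univ _))
    (by rwa [coe_univ]) ?_
  simp

lemma exists_first_mem_Ioc {α : Type*} {idx : ℕ → α} {a b : ℕ} {k : α}
    (h : ∃ j ∈ Ioc a b, idx j = k) :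
    ∃ j ∈ Ioc a b, idx j = k ∧ ∀ s ∈ Ioc a (j - 1), idx s ≠ k := by
  classical
  have hex : ∃ j, a < j ∧ idx j = k := by
    obtain ⟨j, hj, hjk⟩ := h
    exact ⟨j, (mem_Ioc.1 hj).1, hjk⟩
  obtain ⟨j₀, hj₀, hj₀k⟩ := h
  have hmin := Nat.find_min' hex ⟨(mem_Ioc.1 hj₀).1, hj₀k⟩
  refine ⟨Nat.find hex, ?_, (Nat.find_spec hex).2, fun s hs hsk => ?_⟩
  · simp only [mem_Ioc] at hj₀ ⊢
    exact ⟨(Nat.find_spec hex).1, hmin.trans hj₀.2⟩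
  · rw [mem_Ioc] at hs
    exact Nat.find_min hex (by omega) ⟨hs.1, hsk⟩

end CyclicOrder

lemma div_mul_eq_or_eq_add (m P : ℕ) :
    m / P * P = m / (2 * P) * (2 * P) ∨ m / P * P = m / (2 * P) * (2 * P) + P := by
  rw [mul_comm 2 P, ← Nat.div_div_eq_div_mul]
  obtain ⟨q, hq | hq⟩ := Nat.even_or_odd' (m / P) <;> rw [hq]
  · left
    rw [Nat.mul_div_cancel_left q two_pos]
    ring
  · right
    rw [show (2 * q + 1) / 2 = q by omega]
    ring

section DyadicChaining

variable {ι : Type*} [Fintype ι] {G : ℕ → ι → ℝ} {w : ℕ → ℝ} {t₀ N : ℕ}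

lemma sum_sq_dyadic_step_le (hw : ∀ s, 0 ≤ w s)
    (hG : ∀ a b, t₀ ≤ a → a ≤ b → b ≤ t₀ + N → ∑ k, (G b k - G a k) ^ 2 ≤ ∑ s ∈ Ioc a b, w s)
    {m : ι → ℕ} (hm : ∀ k, m k ≤ N) {P : ℕ} (hP : 0 < P) :
    ∑ k, (G (t₀ + m k / P * P) k - G (t₀ + m k / (2 * P) * (2 * P)) k) ^ 2 ≤
      ∑ s ∈ Ioc t₀ (t₀ + N), w s := by
  classical
  set q : ι → ℕ := fun k => m k / (2 * P)
  set B := univ.filter fun k => m k / P * P = q k * (2 * P) + P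
  set I : ℕ → Finset ℕ := fun v => Ioc (t₀ + v * (2 * P)) (t₀ + v * (2 * P) + P)
  have hB : ∀ k ∈ B, q k * (2 * P) + P ≤ N := fun k hk =>
    (mem_filter.1 hk).2 ▸ (Nat.div_mul_le_self _ _).trans (hm k)
  have hdisj : (B.image q : Set ℕ).PairwiseDisjoint I := by
    intro v _ v' _ hvv'
    simp only [Function.onFun, I, disjoint_left, mem_Ioc]
    intro s hs hs'
    rcases Nat.lt_or_gt_of_ne hvv' with h | h <;>
    · have := Nat.mul_le_mul_right (2 * P) (Nat.succ_le_of_lt h)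
      rw [Nat.succ_mul] at this
      omega
  calc ∑ k, (G (t₀ + m k / P * P) k - G (t₀ + q k * (2 * P)) k) ^ 2
      = ∑ k ∈ B, (G (t₀ + q k * (2 * P) + P) k - G (t₀ + q k * (2 * P)) k) ^ 2 := by
        rw [← sum_filter_of_ne (p := fun k => m k / P * P = q k * (2 * P) + P)]
        · refine sum_congr rfl fun k hk => ?_
          rw [(mem_filter.1 hk).2, add_assoc]
        · intro k _ hk
          refine (div_mul_eq_or_eq_add (m k) P).resolve_left fun h => hk ?_
          simp [q, h]
    _ = ∑ v ∈ B.image q, ∑ k ∈ B with q k = v,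
          (G (t₀ + v * (2 * P) + P) k - G (t₀ + v * (2 * P)) k) ^ 2 := by
        rw [← sum_fiberwise_of_maps_to fun k hk => mem_image_of_mem q hk]
        refine sum_congr rfl fun v _ => sum_congr rfl fun k hk => ?_
        rw [(mem_filter.1 hk).2]
    _ ≤ ∑ v ∈ B.image q, ∑ s ∈ I v, w s := by
        refine sum_le_sum fun v hv => ?_
        obtain ⟨k, hk, rfl⟩ := mem_image.1 hv
        exact (sum_le_univ_sum_of_nonneg fun _ => sq_nonneg _).trans
          (hG _ _ (by omega) (by omega) (by have := hB k hk; omega))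
    _ = ∑ s ∈ (B.image q).biUnion I, w s := (sum_biUnion hdisj).symm
    _ ≤ ∑ s ∈ Ioc t₀ (t₀ + N), w s := by
        refine sum_le_sum_of_subset_of_nonneg (fun s hs => ?_) fun s _ _ => hw s
        obtain ⟨v, hv, hs⟩ := mem_biUnion.1 hs
        obtain ⟨k, hk, rfl⟩ := mem_image.1 hv
        have := hB k hk
        simp only [I, mem_Ioc] at hs ⊢
        omega

lemma sum_sq_sub_le_of_dyadic (hw : ∀ s, 0 ≤ w s)
    (hG : ∀ a b, t₀ ≤ a → a ≤ b → b ≤ t₀ + N → ∑ k, (G b k - G a k) ^ 2 ≤ ∑ s ∈ Ioc a b, w s)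
    {m : ι → ℕ} (hm : ∀ k, m k ≤ N) {c : ℕ} (hc : ∀ k, m k < 2 ^ c) :
    ∑ k, (G (t₀ + m k) k - G t₀ k) ^ 2 ≤ c ^ 2 * ∑ s ∈ Ioc t₀ (t₀ + N), w s := by
  set D : ℕ → ι → ℝ := fun ℓ k =>
    G (t₀ + m k / 2 ^ ℓ * 2 ^ ℓ) k - G (t₀ + m k / 2 ^ (ℓ + 1) * 2 ^ (ℓ + 1)) k
  have htel : ∀ k, G (t₀ + m k) k - G t₀ k = ∑ ℓ ∈ range c, D ℓ k := fun k => by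
    rw [sum_range_sub' (fun ℓ => G (t₀ + m k / 2 ^ ℓ * 2 ^ ℓ) k), Nat.div_eq_of_lt (hc k)]
    simp
  calc ∑ k, (G (t₀ + m k) k - G t₀ k) ^ 2
      = ∑ k, (∑ ℓ ∈ range c, D ℓ k) ^ 2 := by simp only [htel]
    _ ≤ ∑ k, c * ∑ ℓ ∈ range c, D ℓ k ^ 2 := by
        gcongr with k
        simpa using sq_sum_le_card_mul_sum_sq (s := range c) (f := fun ℓ => D ℓ k)
    _ = c * ∑ ℓ ∈ range c, ∑ k, D ℓ k ^ 2 := by rw [← mul_sum, sum_comm]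
    _ ≤ c * ∑ ℓ ∈ range c, ∑ s ∈ Ioc t₀ (t₀ + N), w s := by
        gcongr with ℓ
        simpa only [D, pow_succ'] using sum_sq_dyadic_step_le hw hG hm (pow_pos two_pos ℓ)
    _ = c ^ 2 * ∑ s ∈ Ioc t₀ (t₀ + N), w s := by
        rw [sum_const, card_range, nsmul_eq_mul]
        ring

end DyadicChaining

lemma two_mul_mul_le_of_four_div_sqrt_three_mul_le {L c Γ : ℝ} (hL : 0 ≤ L) (hc : 0 ≤ c)
    (hΓ : 4 / Real.sqrt 3 * L * c ≤ Γ) : 2 * c * L ≤ Γ := by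
  have h2 : 2 ≤ 4 / Real.sqrt 3 := by
    rw [le_div_iff₀ (by positivity)]
    nlinarith [Real.sq_sqrt (show (0 : ℝ) ≤ 3 by norm_num), Real.sqrt_nonneg 3]
  nlinarith [mul_le_mul_of_nonneg_right h2 (mul_nonneg hL hc)]

lemma sum_Icc_ge_of_le_mul_sum_Ioc {n t : ℕ} {C : ℝ} (hn : 0 < n) (hC : 0 < C) (ht : 2 * n ≤ t)
    {A P : ℕ → ℝ} (hP : ∀ s, 1 ≤ s → 0 ≤ P s)
    (hA : ∀ i, 1 ≤ i → A i ≤ C * ∑ s ∈ Ioc (i - 1) (i - 1 + n), P s) :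
    ∑ i ∈ Icc (t - 2 * n + 1) t, P i ≥ 1 / (C * n) * ∑ i ∈ Icc (t - 2 * n + 1) (t - n), A i := by
  have hwindow : ∀ i ∈ Icc (t - 2 * n + 1) (t - n), A i ≤ C * ∑ s ∈ Icc (t - 2 * n + 1) t, P s :=
    fun i hi => by
      rw [mem_Icc] at hi
      refine (hA i (by omega)).trans (mul_le_mul_of_nonneg_left ?_ hC.le)
      refine sum_le_sum_of_subset_of_nonneg (fun s hs => ?_) fun s hs _ => hP s ?_
      · simp only [mem_Ioc, mem_Icc] at hs ⊢
        omega
      · have := mem_Icc.1 hs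
        omega
  have hcard : #(Icc (t - 2 * n + 1) (t - n)) = n := by rw [Nat.card_Icc]; omega
  calc 1 / (C * n) * ∑ i ∈ Icc (t - 2 * n + 1) (t - n), A i
      ≤ 1 / (C * n) * ∑ i ∈ Icc (t - 2 * n + 1) (t - n), C * ∑ s ∈ Icc (t - 2 * n + 1) t, P s := by
        gcongr with i hi
        exact hwindow i hi
    _ = ∑ s ∈ Icc (t - 2 * n + 1) t, P s := by
        rw [sum_const, hcard, nsmul_eq_mul]
        field_simp

section CyclicCoordinateDescent

variable {n : ℕ} {f : (Fin n → ℝ) → ℝ} {L Γ : ℝ} {Ψ : Fin n → ℝ → ℝ} {F : (Fin n → ℝ) → ℝ}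
  {x : ℕ → Fin n → ℝ} {idx : ℕ → Fin n} {d : ℕ → ℝ}

lemma W_le_sub_of_step (hf : Differentiable ℝ f) (hL0 : 0 ≤ L)
    (hLf : GradLipschitzWith L f)
    (hF : ∀ y, F y = f y + ∑ k, Ψ k (y k)) (hΓL : L ≤ Γ)
    (hx : ∀ t, 1 ≤ t → x t = x (t - 1) + d t • (Pi.single (idx t) 1 : Fin n → ℝ))
    {t : ℕ} (ht : 1 ≤ t) :
    W (d t) (grad f (x (t - 1)) (idx t)) (x (t - 1) (idx t)) Γ (Ψ (idx t)) ≤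
      F (x (t - 1)) - F (x t) := by
  have h := hLf.W_add_mul_sq_le_sub_of_separable hf hL0 hF Γ (x (t - 1)) (idx t) (d t)
  rw [← hx t ht] at h
  nlinarith [sq_nonneg (d t)]

lemma sum_sq_grad_sub_le_of_injOn
    (hLf : GradLipschitzWith L f)
    (hx : ∀ t, 1 ≤ t → x t = x (t - 1) + d t • (Pi.single (idx t) 1 : Fin n → ℝ))
    {a b : ℕ} (hab : a ≤ b) (hinj : Set.InjOn idx (Ioc a b)) :
    ∑ k, (grad f (x b) k - grad f (x a) k) ^ 2 ≤ ∑ s ∈ Ioc a b, L ^ 2 * d s ^ 2 := by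
  rw [eq_add_sum_Ioc_of_eq_add hx hab, ← mul_sum]
  exact (hLf _ _).trans
    (mul_le_mul_of_nonneg_left (sum_sq_sum_smul_single_le hinj d) (sq_nonneg L))

lemma sum_What_le_of_bijOn (hΨ : ∀ k, ConvexOn ℝ Set.univ (Ψ k)) (hΓ : 0 < Γ)
    (hLf : GradLipschitzWith L f)
    (hx : ∀ t, 1 ≤ t → x t = x (t - 1) + d t • (Pi.single (idx t) 1 : Fin n → ℝ))
    (hd : ∀ t, 1 ≤ t → IsMaxOn
      (fun a => W a (grad f (x (t - 1)) (idx t)) (x (t - 1) (idx t)) Γ (Ψ (idx t))) Set.univ (d t))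
    {t₀ : ℕ} (hbij : Set.BijOn idx (Ioc t₀ (t₀ + n)) Set.univ) {c : ℕ} (hc : n ≤ 2 ^ c) :
    ∑ k, What (grad f (x t₀) k) (x t₀ k) Γ (Ψ k) ≤
      ∑ s ∈ Ioc t₀ (t₀ + n), (2 * W (d s) (grad f (x (s - 1)) (idx s)) (x (s - 1) (idx s)) Γ
        (Ψ (idx s)) + c ^ 2 * L ^ 2 / Γ * d s ^ 2) := by
  classical
  set b : ℕ → ℝ := fun s => W (d s) (grad f (x (s - 1)) (idx s)) (x (s - 1) (idx s)) Γ (Ψ (idx s))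
  choose j hj hjk hfirst using fun k => exists_first_mem_Ioc (hbij.surjOn (Set.mem_univ k))
  have hj' : ∀ k, t₀ < j k ∧ j k ≤ t₀ + n := fun k => mem_Ioc.1 (hj k)
  have hfreeze : ∀ k, x (j k - 1) k = x t₀ k := fun k => by
    rw [eq_add_sum_Ioc_of_eq_add hx (by have := hj' k; omega : t₀ ≤ j k - 1), Pi.add_apply,
      add_eq_left, Finset.sum_apply]
    exact sum_eq_zero fun s hs => by simp [Ne.symm (hfirst k s hs)]
  have hWhat : ∀ k, What (grad f (x t₀) k) (x t₀ k) Γ (Ψ k) ≤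
      2 * b (j k) + (grad f (x (j k - 1)) k - grad f (x t₀) k) ^ 2 / Γ := fun k => by
    have h : What (grad f (x t₀) k) (x (j k - 1) (idx (j k))) Γ (Ψ (idx (j k))) ≤
        2 * b (j k) + (grad f (x (j k - 1)) (idx (j k)) - grad f (x t₀) k) ^ 2 / Γ :=
      What_le_of_isMaxOn (hΨ _) hΓ (hd (j k) (by have := hj' k; omega)) _
    rwa [hjk k, hfreeze k] at h
  have hgain : ∑ k, b (j k) ≤ ∑ s ∈ Ioc t₀ (t₀ + n), b s := by
    rw [← sum_image fun k _ k' _ h => (hjk k).symm.trans ((congrArg idx h).trans (hjk k'))]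
    refine sum_le_sum_of_subset_of_nonneg (fun s hs => ?_) fun s hs _ => ?_
    · obtain ⟨k, -, rfl⟩ := mem_image.1 hs
      exact hj k
    · exact W_nonneg_of_isMaxOn (hd s (by have := mem_Ioc.1 hs; omega))
  have hchain : ∑ k, (grad f (x (j k - 1)) k - grad f (x t₀) k) ^ 2 ≤
      c ^ 2 * ∑ s ∈ Ioc t₀ (t₀ + n), L ^ 2 * d s ^ 2 := by
    have h := sum_sq_sub_le_of_dyadic (G := fun u => grad f (x u))
      (m := fun k => j k - 1 - t₀) (c := c)
      (fun s => by positivity)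
      (fun a b ha hab hb => sum_sq_grad_sub_le_of_injOn hLf hx hab
        (hbij.injOn.mono (coe_subset.2 (Ioc_subset_Ioc ha hb))))
      (fun k => by have := hj' k; omega) (fun k => by have := hj' k; omega)
    have hm : ∀ k, t₀ + (j k - 1 - t₀) = j k - 1 := fun k => by have := hj' k; omega
    simpa only [hm] using h
  calc ∑ k, What (grad f (x t₀) k) (x t₀ k) Γ (Ψ k)
      ≤ ∑ k, (2 * b (j k) + (grad f (x (j k - 1)) k - grad f (x t₀) k) ^ 2 / Γ) :=
        sum_le_sum fun k _ => hWhat k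
    _ = 2 * ∑ k, b (j k) + (∑ k, (grad f (x (j k - 1)) k - grad f (x t₀) k) ^ 2) / Γ := by
        rw [sum_add_distrib, mul_sum, sum_div]
    _ ≤ 2 * ∑ s ∈ Ioc t₀ (t₀ + n), b s + c ^ 2 * (∑ s ∈ Ioc t₀ (t₀ + n), L ^ 2 * d s ^ 2) / Γ := by
        gcongr
    _ = _ := by
        rw [mul_sum, mul_sum, sum_div, ← sum_add_distrib]
        exact sum_congr rfl fun s _ => by ring

lemma sum_What_le_three_mul_sum_sub (hf : Differentiable ℝ f) (hL0 : 0 ≤ L)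
    (hLf : GradLipschitzWith L f)
    (hΨ : ∀ k, ConvexOn ℝ Set.univ (Ψ k)) (hF : ∀ y, F y = f y + ∑ k, Ψ k (y k)) (hΓ : 0 < Γ)
    (hx : ∀ t, 1 ≤ t → x t = x (t - 1) + d t • (Pi.single (idx t) 1 : Fin n → ℝ))
    (hd : ∀ t, 1 ≤ t → IsMaxOn
      (fun a => W a (grad f (x (t - 1)) (idx t)) (x (t - 1) (idx t)) Γ (Ψ (idx t))) Set.univ (d t))
    {t₀ : ℕ} (hbij : Set.BijOn idx (Ioc t₀ (t₀ + n)) Set.univ) {c : ℕ} (hc : n ≤ 2 ^ c)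
    (hΓL : L ≤ Γ) (hΓc : 2 * c * L ≤ Γ) :
    ∑ k, What (grad f (x t₀) k) (x t₀ k) Γ (Ψ k) ≤
      3 * ∑ s ∈ Ioc t₀ (t₀ + n), (F (x (s - 1)) - F (x s)) := by
  have hcoef : c ^ 2 * L ^ 2 / Γ ≤ Γ / 4 := by
    rw [div_le_iff₀ hΓ]
    nlinarith [mul_nonneg (Nat.cast_nonneg c : (0 : ℝ) ≤ c) hL0]
  refine (sum_What_le_of_bijOn hΨ hΓ hLf hx hd hbij hc).trans ?_
  rw [mul_sum]
  refine sum_le_sum fun s hs => ?_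
  have hs1 : 1 ≤ s := by have := mem_Ioc.1 hs; omega
  have := mul_sq_le_W_of_isMaxOn (hΨ _) (hd s hs1)
  have := W_le_sub_of_step hf hL0 hLf hF hΓL hx hs1
  nlinarith [mul_le_mul_of_nonneg_right hcoef (sq_nonneg (d s))]

end CyclicCoordinateDescent

theorem ccd_amortized_progress_general {n : ℕ} (hn : 2 ≤ n)
    (f : (Fin n → ℝ) → ℝ) (hf : Differentiable ℝ f)
    (L : ℝ)
    (hL : ∀ x y : Fin n → ℝ,
      Real.sqrt (∑ k, (grad f (x + y) k - grad f x k) ^ 2) ≤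
        L * Real.sqrt (∑ k, y k ^ 2))
    (Ψ : Fin n → ℝ → ℝ) (hΨ : ∀ k, ConvexOn ℝ Set.univ (Ψ k))
    (F : (Fin n → ℝ) → ℝ) (hF : ∀ y, F y = f y + ∑ k, Ψ k (y k))
    (Γ : ℝ) (hΓpos : 0 < Γ) (hΓ : Γ ≥ 4 / Real.sqrt 3 * L * (Nat.clog 2 n : ℝ))
    (x : ℕ → Fin n → ℝ) (idx : ℕ → Fin n) (d : ℕ → ℝ)
    (hcyc : ∀ t : ℕ, 1 ≤ t → idx (t + n) = idx t)
    (hcover : ∀ c : Fin n, ∃ i : ℕ, 1 ≤ i ∧ i ≤ n ∧ idx i = c)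
    (hd : ∀ t : ℕ, 1 ≤ t →
      IsMaxOn
        (fun a : ℝ =>
          W a (grad f (x (t - 1)) (idx t)) (x (t - 1) (idx t)) Γ (Ψ (idx t)))
        Set.univ (d t))
    (hx : ∀ t : ℕ, 1 ≤ t →
      x t = x (t - 1) + d t • (Pi.single (idx t) 1 : Fin n → ℝ)) :
    (∀ t : ℕ, 1 ≤ t → F (x t) ≤ F (x (t - 1))) ∧
    (∀ t : ℕ, 2 * n ≤ t →
      ∑ i ∈ Finset.Icc (t - 2 * n + 1) t, (F (x (i - 1)) - F (x i)) ≥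
        1 / (3 * n) *
          ∑ i ∈ Finset.Icc (t - 2 * n + 1) (t - n),
            ∑ k, What (grad f (x (i - 1)) k) (x (i - 1) k) Γ (Ψ k)) := by
  have hL0 : 0 ≤ L := nonneg_of_sqrt_sum_sq_grad_sub_le (by omega) hL
  have hLf := gradLipschitzWith_of_sqrt_le hL
  have hΓc := two_mul_mul_le_of_four_div_sqrt_three_mul_le hL0 (Nat.cast_nonneg _) hΓ
  have hΓL : L ≤ Γ := by
    have : (1 : ℝ) ≤ Nat.clog 2 n := Nat.one_le_cast.2 (Nat.clog_pos one_lt_two hn)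
    nlinarith
  have hdesc : ∀ t, 1 ≤ t → 0 ≤ F (x (t - 1)) - F (x t) := fun t ht =>
    (W_nonneg_of_isMaxOn (hd t ht)).trans (W_le_sub_of_step hf hL0 hLf hF hΓL hx ht)
  exact ⟨fun t ht => by linarith [hdesc t ht], fun t ht =>
    sum_Icc_ge_of_le_mul_sum_Ioc (by omega) three_pos ht hdesc fun i _ =>
      sum_What_le_three_mul_sum_sub hf hL0 hLf hΨ hF hΓpos hx hd
        (bijOn_Ioc_of_cyclic hcyc hcover (i - 1)) (Nat.le_pow_clog one_lt_two n) hΓL hΓc⟩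

/-- Cyclic coordinate descent satisfies the amortized progress inequality: for
`n ≥ 2`, `f` differentiable and `L`-Lipschitz-smooth, `Γ ≥ (4/√3)·L·⌈log₂ n⌉`, and
the cyclic coordinate descent sequence `x^t = x^{t-1} + d̂(∇_{k_t} f(x^{t-1}),
x^{t-1}_{k_t}, Γ, Ψ_{k_t})·e_{k_t}`:
(a) `F(x^t) ≤ F(x^{t-1})` for all `t ≥ 1`, and
(b) for every `t ≥ 2n`, `Σ_{i=t-2n+1}^{t} [F(x^{i-1}) - F(x^i)] ≥
(1/(3n))·Σ_{i=t-2n+1}^{t-n} Σ_k Ŵ(∇_k f(x^{i-1}), x^{i-1}_k, Γ, Ψ_k)`. -/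
theorem ccd_amortized_progress {n : ℕ} (hn : 2 ≤ n)
    (f : (Fin n → ℝ) → ℝ) (hf : Differentiable ℝ f) (hfc : ConvexOn ℝ Set.univ f)
    (L : ℝ)
    (hL : ∀ x y : Fin n → ℝ,
      Real.sqrt (∑ k, (grad f (x + y) k - grad f x k) ^ 2) ≤
        L * Real.sqrt (∑ k, y k ^ 2))
    (Ψ : Fin n → ℝ → ℝ) (hΨ : ∀ k, ConvexOn ℝ Set.univ (Ψ k))
    (F : (Fin n → ℝ) → ℝ) (hF : ∀ y, F y = f y + ∑ k, Ψ k (y k))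
    (Γ : ℝ) (hΓpos : 0 < Γ) (hΓ : Γ ≥ 4 / Real.sqrt 3 * L * (Nat.clog 2 n : ℝ))
    (x : ℕ → Fin n → ℝ) (idx : ℕ → Fin n) (d : ℕ → ℝ)
    (hcyc : ∀ t : ℕ, 1 ≤ t → idx (t + n) = idx t)
    (hcover : ∀ c : Fin n, ∃ i : ℕ, 1 ≤ i ∧ i ≤ n ∧ idx i = c)
    (hd : ∀ t : ℕ, 1 ≤ t →
      IsMaxOn
        (fun a : ℝ =>
          W a (grad f (x (t - 1)) (idx t)) (x (t - 1) (idx t)) Γ (Ψ (idx t)))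
        Set.univ (d t))
    (hx : ∀ t : ℕ, 1 ≤ t →
      x t = x (t - 1) + d t • (Pi.single (idx t) 1 : Fin n → ℝ)) :
    (∀ t : ℕ, 1 ≤ t → F (x t) ≤ F (x (t - 1))) ∧
    (∀ t : ℕ, 2 * n ≤ t →
      ∑ i ∈ Finset.Icc (t - 2 * n + 1) t, (F (x (i - 1)) - F (x i)) ≥
        1 / (3 * n) *
          ∑ i ∈ Finset.Icc (t - 2 * n + 1) (t - n),
            ∑ k, What (grad f (x (i - 1)) k) (x (i - 1) k) Γ (Ψ k)) :=
  ccd_amortized_progress_general hn f hf L hL Ψ hΨ F hF Γ hΓpos hΓ x idx d hcyc hcover hd hx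
end

section
/- κ_max gradient-difference bound: let f : ℝⁿ → ℝ be differentiable and L-Lipschitz-smooth. Let x^{τ₁}, x^{τ₁+1}, …, x^{τ₂} be a finite sequence in ℝⁿ with x^{τ} = x^{τ−1} + Δ_τ·e_{k_τ} for reals Δ_τ, and suppose each coordinate k ∈ {1, …, n} satisfies #{τ ∈ (τ₁, τ₂] : k_τ = k} ≤ κ_max. Then Σ_{k=1}^n ( ∇_k f(x^{τ₂}) − ∇_k f(x^{τ₁}) )² ≤ L²·κ_max·Σ_{τ=τ₁+1}^{τ₂} (Δ_τ)². -/
open Finset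

theorem sub_eq_sum_Ioc_of_forall_eq_add {M : Type*} [AddCommGroup M] {x v : ℕ → M} {a b : ℕ}
    (hab : a ≤ b) (h : ∀ τ, a < τ → τ ≤ b → x τ = x (τ - 1) + v τ) :
    x b - x a = ∑ τ ∈ Ioc a b, v τ := by
  rw [← Ico_add_one_add_one_eq_Ioc, ← sum_Ico_add', ← sum_Ico_sub x hab]
  refine sum_congr rfl fun τ hτ => ?_
  obtain ⟨haτ, hτb⟩ := mem_Ico.mp hτ
  rw [h (τ + 1) (by omega) (by omega), Nat.add_sub_cancel, add_sub_cancel_left]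

theorem sum_smul_single_one_apply {α ι R : Type*} [DecidableEq ι] [Semiring R]
    (s : Finset α) (g : α → ι) (c : α → R) (k : ι) :
    (∑ τ ∈ s, c τ • (Pi.single (g τ) 1 : ι → R)) k = ∑ τ ∈ s with g τ = k, c τ := by
  simp [Finset.sum_apply, Pi.single_apply, sum_filter, eq_comm]

theorem sum_sq_sum_fiber_le {α ι R : Type*} [Fintype ι] [DecidableEq ι]
    [Semiring R] [LinearOrder R] [IsStrictOrderedRing R] [ExistsAddOfLE R]
    (s : Finset α) (g : α → ι) (c : α → R) (κ : ℕ) (hκ : ∀ k, #{τ ∈ s | g τ = k} ≤ κ) :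
    ∑ k, (∑ τ ∈ s with g τ = k, c τ) ^ 2 ≤ κ * ∑ τ ∈ s, c τ ^ 2 := by
  calc ∑ k, (∑ τ ∈ s with g τ = k, c τ) ^ 2
      ≤ ∑ k, (κ : R) * ∑ τ ∈ s with g τ = k, c τ ^ 2 := by
        gcongr with k
        refine sq_sum_le_card_mul_sum_sq.trans ?_
        gcongr
        · exact sum_nonneg fun _ _ => sq_nonneg _
        · exact_mod_cast hκ k
    _ = κ * ∑ τ ∈ s, c τ ^ 2 := by rw [← mul_sum, sum_fiberwise]

theorem le_sq_mul_of_sqrt_le_mul {a b L : ℝ} (ha : 0 ≤ a) (hb : 0 ≤ b)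
    (h : √a ≤ L * √b) : a ≤ L ^ 2 * b := by
  calc a = √a ^ 2 := (Real.sq_sqrt ha).symm
    _ ≤ (L * √b) ^ 2 := pow_le_pow_left₀ (Real.sqrt_nonneg a) h 2
    _ = L ^ 2 * b := by rw [mul_pow, Real.sq_sqrt hb]

theorem kappa_max_gradient_difference_bound_general {n : ℕ}
    (f : (Fin n → ℝ) → ℝ) (L : ℝ)
    (hL : ∀ x y : Fin n → ℝ,
      Real.sqrt (∑ k, (grad f (x + y) k - grad f x k) ^ 2) ≤
        L * Real.sqrt (∑ k, y k ^ 2))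
    (τ₁ τ₂ : ℕ) (hτ : τ₁ ≤ τ₂)
    (x : ℕ → Fin n → ℝ) (idx : ℕ → Fin n) (Δ : ℕ → ℝ)
    (hx : ∀ τ : ℕ, τ₁ < τ → τ ≤ τ₂ →
      x τ = x (τ - 1) + Δ τ • (Pi.single (idx τ) 1 : Fin n → ℝ))
    (κmax : ℕ)
    (hκ : ∀ c : Fin n,
      ((Finset.Ioc τ₁ τ₂).filter fun τ => idx τ = c).card ≤ κmax) :
    ∑ k, (grad f (x τ₂) k - grad f (x τ₁) k) ^ 2 ≤
      L ^ 2 * κmax * ∑ τ ∈ Finset.Ioc τ₁ τ₂, Δ τ ^ 2 := by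
  have hsmooth := hL (x τ₁) (x τ₂ - x τ₁)
  rw [add_sub_cancel] at hsmooth
  have hcoord : ∀ k, (x τ₂ - x τ₁) k = ∑ τ ∈ Ioc τ₁ τ₂ with idx τ = k, Δ τ := fun k => by
    rw [sub_eq_sum_Ioc_of_forall_eq_add hτ hx, sum_smul_single_one_apply]
  calc ∑ k, (grad f (x τ₂) k - grad f (x τ₁) k) ^ 2
      ≤ L ^ 2 * ∑ k, (x τ₂ - x τ₁) k ^ 2 :=
        le_sq_mul_of_sqrt_le_mul (by positivity) (by positivity) hsmooth
    _ ≤ L ^ 2 * (κmax * ∑ τ ∈ Ioc τ₁ τ₂, Δ τ ^ 2) := by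
        simp only [hcoord]
        gcongr
        exact sum_sq_sum_fiber_le _ idx Δ κmax hκ
    _ = L ^ 2 * κmax * ∑ τ ∈ Ioc τ₁ τ₂, Δ τ ^ 2 := by ring

/-- `κ_max` gradient-difference bound: for an `L`-Lipschitz-smooth differentiable `f`
and a finite single-coordinate-update sequence `x^τ = x^{τ-1} + Δ_τ·e_{k_τ}`
(for `τ₁ < τ ≤ τ₂`) in which each coordinate is updated at most `κ_max` times,
`Σ_k (∇_k f(x^{τ₂}) - ∇_k f(x^{τ₁}))² ≤ L²·κ_max·Σ_{τ=τ₁+1}^{τ₂} Δ_τ²`. -/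
theorem kappa_max_gradient_difference_bound {n : ℕ}
    (f : (Fin n → ℝ) → ℝ) (hf : Differentiable ℝ f) (L : ℝ) (hL0 : 0 ≤ L)
    (hL : ∀ x y : Fin n → ℝ,
      Real.sqrt (∑ k, (grad f (x + y) k - grad f x k) ^ 2) ≤
        L * Real.sqrt (∑ k, y k ^ 2))
    (τ₁ τ₂ : ℕ) (hτ : τ₁ ≤ τ₂)
    (x : ℕ → Fin n → ℝ) (idx : ℕ → Fin n) (Δ : ℕ → ℝ)
    (hx : ∀ τ : ℕ, τ₁ < τ → τ ≤ τ₂ →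
      x τ = x (τ - 1) + Δ τ • (Pi.single (idx τ) 1 : Fin n → ℝ))
    (κmax : ℕ)
    (hκ : ∀ c : Fin n,
      ((Finset.Ioc τ₁ τ₂).filter fun τ => idx τ = c).card ≤ κmax) :
    ∑ k, (grad f (x τ₂) k - grad f (x τ₁) k) ^ 2 ≤
      L ^ 2 * κmax * ∑ τ ∈ Finset.Ioc τ₁ τ₂, Δ τ ^ 2 :=
  kappa_max_gradient_difference_bound_general f L hL τ₁ τ₂ hτ x idx Δ hx κmax hκ
end
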